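/- arXiv:1111.5959 — 8 statements merged into one kernel-verified Lean document; each statement's English description precedes it below -/
import Mathlib

section
/- Let K and L be positive integers and let γ = (γ_1,…,γ_K) and δ = (δ_1,…,δ_L) be vectors of positive integers. Then the following two statements are equivalent: (i) for every partition λ, the product ∏_{l=1}^L H_{δ_l}(λ) divides the product ∏_{k=1}^K H_{γ_k}(λ) (i.e. the hook ratio ∏_k H_{γ_k}(λ) / ∏_l H_{δ_l}(λ) is an integer); (ii) for every partition μ, Σ_{k=1}^K h_{γ_k}(μ) − Σ_{l=1}^L h_{δ_l}(μ) ≥ 0. -/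
/-- The hook length of the box in row `i`, column `j` of the Young diagram `μ`:
one plus the arm length plus the leg length. -/
def hookLength (μ : YoungDiagram) (i j : ℕ) : ℕ :=
  (μ.rowLen i - j) + (μ.colLen j - i) - 1

/-- `hookCount r μ` is the number of boxes of `μ` whose hook length is divisible by `r`. -/
def hookCount (r : ℕ) (μ : YoungDiagram) : ℕ :=
  (μ.cells.filter fun c => r ∣ hookLength μ c.1 c.2).card

/-- `hookProd r μ` is the product of `h(□)/r` over all boxes `□` of `μ` with `r ∣ h(□)`. -/
def hookProd (r : ℕ) (μ : YoungDiagram) : ℕ :=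
  ∏ c ∈ μ.cells.filter (fun c => r ∣ hookLength μ c.1 c.2), hookLength μ c.1 c.2 / r

namespace HookThm

def beta (ν : YoungDiagram) (i : ℕ) : ℤ := (ν.rowLen i : ℤ) - i - 1
def gg (ν : YoungDiagram) (j : ℕ) : ℤ := (j : ℤ) - ν.colLen j

lemma beta_strictAnti (ν : YoungDiagram) : StrictAnti (beta ν) :=
  strictAnti_nat_of_succ_lt (fun i => by
    have := ν.rowLen_anti i (i+1) (Nat.le_succ i); unfold beta; omega)

lemma gg_strictMono (ν : YoungDiagram) : StrictMono (gg ν) :=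
  strictMono_nat_of_lt_succ (fun j => by
    have := ν.colLen_anti j (j+1) (Nat.le_succ j); unfold gg; omega)

lemma beta_ne_gg (ν : YoungDiagram) (i j : ℕ) : beta ν i ≠ gg ν j := by
  intro h
  unfold beta gg at h
  rcases le_or_gt (ν.colLen j) i with hc | hc
  · have h1 : ¬ ((i, j) ∈ ν) := by
      rw [YoungDiagram.mem_iff_lt_colLen]; omega
    rw [YoungDiagram.mem_iff_lt_rowLen] at h1
    omega
  · have h1 : (i, j) ∈ ν := YoungDiagram.mem_iff_lt_colLen.2 hc
    rw [YoungDiagram.mem_iff_lt_rowLen] at h1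
    omega

lemma mem_iff_gg_lt_beta {ν : YoungDiagram} {i j : ℕ} :
    (i, j) ∈ ν ↔ gg ν j < beta ν i := by
  constructor
  · intro h
    have h1 := YoungDiagram.mem_iff_lt_rowLen.1 h
    have h2 := YoungDiagram.mem_iff_lt_colLen.1 h
    unfold beta gg; omega
  · intro h
    by_contra hne
    have h1 : ν.rowLen i ≤ j := by
      rcases Nat.lt_or_ge j (ν.rowLen i) with hh | hh
      · exact absurd (YoungDiagram.mem_iff_lt_rowLen.2 hh) hne
      · exact hh
    have h2 : ν.colLen j ≤ i := by
      rcases Nat.lt_or_ge i (ν.colLen j) with hh | hh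
      · exact absurd (YoungDiagram.mem_iff_lt_colLen.2 hh) hne
      · exact hh
    unfold beta gg at h; omega

lemma hook_eq {ν : YoungDiagram} {i j : ℕ} (h : (i, j) ∈ ν) :
    (hookLength ν i j : ℤ) = beta ν i - gg ν j := by
  have h1 := YoungDiagram.mem_iff_lt_rowLen.1 h
  have h2 := YoungDiagram.mem_iff_lt_colLen.1 h
  unfold hookLength beta gg; omega

lemma hook_pos {ν : YoungDiagram} {i j : ℕ} (h : (i, j) ∈ ν) :
    0 < hookLength ν i j := by
  have h1 := YoungDiagram.mem_iff_lt_rowLen.1 h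
  have h2 := YoungDiagram.mem_iff_lt_colLen.1 h
  unfold hookLength; omega

lemma rowLen_zero_of_le {ν : YoungDiagram} {i : ℕ} (h : ν.colLen 0 ≤ i) :
    ν.rowLen i = 0 := by
  have h1 : ¬ ((i, 0) ∈ ν) := by
    rw [YoungDiagram.mem_iff_lt_colLen]; omega
  rw [YoungDiagram.mem_iff_lt_rowLen] at h1
  omega

lemma cover (ν : YoungDiagram) (n : ℤ) :
    (∃ i, beta ν i = n) ∨ (∃ j, gg ν j = n) := by
  classical
  rcases lt_or_ge n (gg ν 0) with h0 | h0
  · left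
    have hR : (ν.colLen 0 : ℤ) ≤ -1 - n := by unfold gg at h0; omega
    refine ⟨(-1 - n).toNat, ?_⟩
    have hz : ν.rowLen ((-1 - n).toNat) = 0 :=
      rowLen_zero_of_le (by omega)
    unfold beta; rw [hz]; omega
  · have hex : ∃ j : ℕ, n < gg ν j := by
      refine ⟨(n + ν.colLen 0 + 1).toNat, ?_⟩
      have hc := ν.colLen_anti 0 ((n + ν.colLen 0 + 1).toNat) (Nat.zero_le _)
      unfold gg
      omega
    set j1 := Nat.find hex with hj1def
    have hj1 : n < gg ν j1 := Nat.find_spec hex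
    have hj1pos : j1 ≠ 0 := by
      intro h; rw [h] at hj1; omega
    obtain ⟨j, hj⟩ : ∃ j, j1 = j + 1 := ⟨j1 - 1, by omega⟩
    have hprev : ¬ n < gg ν j := Nat.find_min hex (by omega)
    rcases eq_or_lt_of_le (not_lt.1 hprev) with heq | hlt
    · right; exact ⟨j, heq⟩
    · left
      rw [hj] at hj1
      have h1 : (ν.colLen (j+1) : ℤ) ≤ (j : ℤ) - n := by unfold gg at hj1; omega
      have h2 : ((j : ℤ) - n) < ν.colLen j := by unfold gg at hlt; omega
      refine ⟨((j : ℤ) - n).toNat, ?_⟩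
      have hmem : (((j : ℤ) - n).toNat, j) ∈ ν := by
        rw [YoungDiagram.mem_iff_lt_colLen]; omega
      have hnot : ¬ ((((j : ℤ) - n).toNat, j + 1) ∈ ν) := by
        rw [YoungDiagram.mem_iff_lt_colLen]; omega
      have hr1 := YoungDiagram.mem_iff_lt_rowLen.1 hmem
      rw [YoungDiagram.mem_iff_lt_rowLen] at hnot
      unfold beta; omega


structure Bnds (T : ℤ → Bool) (lo hi : ℤ) : Prop where
  lo0 : lo < 0
  hi0 : 0 ≤ hi
  hlo : ∀ x, x ≤ lo → T x = true
  hhi : ∀ x, hi ≤ x → T x = false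

noncomputable def pairsOf (T : ℤ → Bool) (lo hi : ℤ) : Finset (ℤ × ℤ) :=
  ((Finset.Ioo lo hi) ×ˢ (Finset.Ioo lo hi)).filter fun pr => T pr.1 ∧ ¬ T pr.2 ∧ pr.2 < pr.1

lemma mem_pairsOf {T : ℤ → Bool} {lo hi : ℤ} (hb : Bnds T lo hi) {pr : ℤ × ℤ} :
    pr ∈ pairsOf T lo hi ↔ (T pr.1 ∧ ¬ T pr.2 ∧ pr.2 < pr.1) := by
  unfold pairsOf
  simp only [Finset.mem_filter, Finset.mem_product, Finset.mem_Ioo]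
  constructor
  · exact fun h => h.2
  · rintro ⟨h1, h2, h3⟩
    have hb1 : pr.1 < hi := by
      by_contra hx
      rw [hb.hhi pr.1 (by omega)] at h1
      exact absurd h1 (by simp)
    have hb2 : lo < pr.2 := by
      by_contra hx
      exact h2 (hb.hlo pr.2 (by omega))
    exact ⟨⟨⟨by omega, hb1⟩, ⟨hb2, by omega⟩⟩, h1, h2, h3⟩

noncomputable def mcount (r : ℕ) (T : ℤ → Bool) (lo hi : ℤ) : ℕ :=
  ((pairsOf T lo hi).filter fun pr => (r : ℤ) ∣ pr.1 - pr.2).card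

noncomputable def mprod (r : ℕ) (T : ℤ → Bool) (lo hi : ℤ) : ℕ :=
  ∏ pr ∈ (pairsOf T lo hi).filter (fun pr => (r : ℤ) ∣ pr.1 - pr.2),
    ((pr.1 - pr.2) / (r : ℤ)).toNat

def SB (ν : YoungDiagram) (n : ℤ) : Bool :=
  decide (n < -(ν.colLen 0 : ℤ)) || decide (∃ i ∈ Finset.range (ν.colLen 0), beta ν i = n)

lemma SB_iff (ν : YoungDiagram) (n : ℤ) : SB ν n = true ↔ ∃ i, beta ν i = n := by
  unfold SB
  simp only [Bool.or_eq_true, decide_eq_true_eq, Finset.mem_range]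
  constructor
  · rintro (h | ⟨i, _, h⟩)
    · refine ⟨(-1 - n).toNat, ?_⟩
      have hz : ν.rowLen ((-1 - n).toNat) = 0 := rowLen_zero_of_le (by omega)
      unfold beta; rw [hz]; omega
    · exact ⟨i, h⟩
  · rintro ⟨i, rfl⟩
    rcases lt_or_ge i (ν.colLen 0) with h | h
    · exact Or.inr ⟨i, h, rfl⟩
    · left
      have hz := rowLen_zero_of_le (ν := ν) h
      unfold beta; rw [hz]; omega

def loY (ν : YoungDiagram) : ℤ := -(ν.colLen 0 : ℤ) - 1
def hiY (ν : YoungDiagram) : ℤ := (ν.rowLen 0 : ℤ) + 1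

lemma bnds_SB (ν : YoungDiagram) : Bnds (SB ν) (loY ν) (hiY ν) where
  lo0 := by unfold loY; omega
  hi0 := by unfold hiY; omega
  hlo := fun x hx => by
    have h1 : x < -(ν.colLen 0 : ℤ) := by unfold loY at hx; omega
    unfold SB
    simp [h1]
  hhi := fun x hx => by
    have hβ : ∀ i, beta ν i < x := fun i => by
      have h0 : beta ν i ≤ beta ν 0 := (beta_strictAnti ν).antitone (Nat.zero_le i)
      unfold beta at h0 ⊢; unfold hiY at hx; omega
    unfold SB
    rw [Bool.or_eq_false_iff]
    constructor
    · simp only [decide_eq_false_iff_not]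
      unfold hiY at hx
      omega
    · simp only [decide_eq_false_iff_not]
      rintro ⟨i, -, h⟩
      exact absurd h (ne_of_lt (hβ i))

lemma bridge (ν : YoungDiagram) (r : ℕ) :
    hookCount r ν = mcount r (SB ν) (loY ν) (hiY ν) ∧
    hookProd r ν = mprod r (SB ν) (loY ν) (hiY ν) := by
  classical
  have hb := bnds_SB ν
  set s := ν.cells.filter (fun c => r ∣ hookLength ν c.1 c.2) with hs
  set t := (pairsOf (SB ν) (loY ν) (hiY ν)).filter (fun pr => (r : ℤ) ∣ pr.1 - pr.2) with ht
  have hmaps : ∀ c ∈ s, (beta ν c.1, gg ν c.2) ∈ t := by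
    intro c hc
    rw [hs, Finset.mem_filter] at hc
    obtain ⟨hcm, hdvd⟩ := hc
    have hmem : (c.1, c.2) ∈ ν := (YoungDiagram.mem_cells _).1 hcm
    rw [ht, Finset.mem_filter]
    constructor
    · rw [mem_pairsOf hb]
      refine ⟨(SB_iff ν _).2 ⟨c.1, rfl⟩, ?_, ?_⟩
      · intro hT
        obtain ⟨i, hi⟩ := (SB_iff ν _).1 hT
        exact beta_ne_gg ν i c.2 hi
      · exact mem_iff_gg_lt_beta.1 hmem
    · show (r : ℤ) ∣ beta ν c.1 - gg ν c.2
      rw [← hook_eq hmem]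
      exact Int.natCast_dvd_natCast.2 hdvd
  have hinj : ∀ a ∈ s, ∀ b ∈ s,
      (beta ν a.1, gg ν a.2) = (beta ν b.1, gg ν b.2) → a = b := by
    intro a _ b _ h
    rw [Prod.mk.injEq] at h
    exact Prod.ext ((beta_strictAnti ν).injective h.1) ((gg_strictMono ν).injective h.2)
  have hsurj : ∀ pr ∈ t, ∃ c, ∃ hc : c ∈ s, (beta ν c.1, gg ν c.2) = pr := by
    intro pr hpr
    rw [ht, Finset.mem_filter] at hpr
    obtain ⟨hp, hdvd⟩ := hpr
    rw [mem_pairsOf hb] at hp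
    obtain ⟨hT1, hT2, hlt⟩ := hp
    obtain ⟨i, hi⟩ := (SB_iff ν _).1 hT1
    have hgg : ∃ j, gg ν j = pr.2 := by
      rcases cover ν pr.2 with h | h
      · exact absurd ((SB_iff ν _).2 h) hT2
      · exact h
    obtain ⟨j, hj⟩ := hgg
    have hmem : (i, j) ∈ ν := mem_iff_gg_lt_beta.2 (by omega)
    refine ⟨(i, j), ?_, by rw [hi, hj]⟩
    rw [hs, Finset.mem_filter]
    refine ⟨(YoungDiagram.mem_cells _).2 hmem, ?_⟩
    have : (r : ℤ) ∣ (hookLength ν i j : ℤ) := by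
      rw [hook_eq hmem, hi, hj]; exact hdvd
    exact_mod_cast this
  constructor
  · exact Finset.card_bij (fun c _ => (beta ν c.1, gg ν c.2)) hmaps hinj hsurj
  · refine Finset.prod_bij (fun c _ => (beta ν c.1, gg ν c.2)) hmaps hinj hsurj ?_
    intro c hc
    rw [Finset.mem_filter] at hc
    have hmem : (c.1, c.2) ∈ ν := (YoungDiagram.mem_cells _).1 hc.1
    show hookLength ν c.1 c.2 / r = ((beta ν c.1 - gg ν c.2) / (r : ℤ)).toNat
    rw [← hook_eq hmem, ← Int.natCast_div]
    exact (Int.toNat_natCast _).symm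


variable {T : ℤ → Bool} {lo hi : ℤ}

def PP (T : ℤ → Bool) (hi : ℤ) : ℕ → Prop := fun n => T (hi - 1 - n) = true

instance (T : ℤ → Bool) (hi : ℤ) : DecidablePred (PP T hi) := fun n =>
  inferInstanceAs (Decidable (_ = _))

lemma PP_infinite (hb : Bnds T lo hi) : (setOf (PP T hi)).Infinite := by
  apply Set.Infinite.mono (s := Set.Ici ((hi - 1 - lo).toNat))
  · intro n hn
    have hn' : (hi - 1 - lo).toNat ≤ n := hn
    show T (hi - 1 - n) = true
    exact hb.hlo _ (by omega)
  · exact Set.Ici_infinite _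

noncomputable def xx (T : ℤ → Bool) (hi : ℤ) (k : ℕ) : ℤ := hi - 1 - (Nat.nth (PP T hi) k)

lemma xx_mem (hb : Bnds T lo hi) (k : ℕ) : T (xx T hi k) = true :=
  Nat.nth_mem_of_infinite (PP_infinite hb) k

lemma xx_strictAnti (hb : Bnds T lo hi) : StrictAnti (xx T hi) := by
  intro a b hab
  have h := (Nat.nth_lt_nth (PP_infinite hb) (k := a) (n := b)).2 hab
  unfold xx; omega

lemma xx_surj (hb : Bnds T lo hi) {z : ℤ} (hz : T z = true) : ∃ k, xx T hi k = z := by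
  have hzhi : z < hi := by
    by_contra hx
    rw [hb.hhi z (by omega)] at hz
    simp at hz
  have hp : PP T hi ((hi - 1 - z).toNat) := by
    show T _ = true
    have : hi - 1 - ((hi - 1 - z).toNat : ℤ) = z := by omega
    rw [this]; exact hz
  refine ⟨Nat.count (PP T hi) ((hi - 1 - z).toNat), ?_⟩
  unfold xx
  rw [Nat.nth_count hp]
  omega

lemma xx_between (hb : Bnds T lo hi) {k : ℕ} {z : ℤ} (hz : T z = true)
    (h1 : z < xx T hi k) : z ≤ xx T hi (k + 1) := by
  obtain ⟨j, rfl⟩ := xx_surj hb hz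
  have hkj : k < j := by
    by_contra hx
    have := (xx_strictAnti hb).antitone (show j ≤ k by omega)
    omega
  exact (xx_strictAnti hb).antitone (show k + 1 ≤ j by omega)

noncomputable def qq (T : ℤ → Bool) (lo hi : ℤ) (k : ℕ) : ℕ :=
  ((Finset.Ioo lo (xx T hi k)).filter fun c => ¬ T c).card

lemma qq_anti (hb : Bnds T lo hi) : Antitone (qq T lo hi) := by
  apply antitone_nat_of_succ_le
  intro k
  apply Finset.card_le_card
  apply Finset.filter_subset_filter
  apply Finset.Ioo_subset_Ioo le_rfl
  exact ((xx_strictAnti hb) (Nat.lt_succ_self k)).le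

lemma qq_succ (hb : Bnds T lo hi) (k : ℕ) :
    (qq T lo hi k : ℤ) = qq T lo hi (k + 1) + (xx T hi k - xx T hi (k + 1) - 1) := by
  classical
  have hxk : xx T hi (k + 1) < xx T hi k := (xx_strictAnti hb) (Nat.lt_succ_self k)
  have hsplit : (Finset.Ioo lo (xx T hi k)).filter (fun c => ¬ T c)
      = ((Finset.Ioo lo (xx T hi (k + 1))).filter (fun c => ¬ T c))
        ∪ Finset.Ioo (xx T hi (k + 1)) (xx T hi k) := by
    ext c
    simp only [Finset.mem_union, Finset.mem_filter, Finset.mem_Ioo]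
    constructor
    · rintro ⟨⟨hc1, hc2⟩, hc3⟩
      rcases lt_or_ge c (xx T hi (k + 1)) with h | h
      · exact Or.inl ⟨⟨hc1, h⟩, hc3⟩
      · right
        refine ⟨lt_of_le_of_ne h ?_, hc2⟩
        intro hcon
        rw [← hcon] at hc3
        exact hc3 (xx_mem hb (k + 1))
    · rintro (⟨⟨hc1, hc2⟩, hc3⟩ | ⟨hc1, hc2⟩)
      · exact ⟨⟨hc1, by omega⟩, hc3⟩
      · have hnT : ¬ T c = true := by
          intro hTc
          have := xx_between hb hTc hc2
          omega
        have hclo : lo < c := by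
          by_contra hx
          exact hnT (hb.hlo c (by omega))
        exact ⟨⟨hclo, hc2⟩, hnT⟩
  have hdisj : Disjoint ((Finset.Ioo lo (xx T hi (k + 1))).filter (fun c => ¬ T c))
      (Finset.Ioo (xx T hi (k + 1)) (xx T hi k)) := by
    rw [Finset.disjoint_left]
    intro c hc1 hc2
    simp only [Finset.mem_filter, Finset.mem_Ioo] at hc1 hc2
    omega
  have := Finset.card_union_of_disjoint hdisj
  unfold qq
  rw [hsplit, this, Int.card_Ioo]
  push_cast
  omega

lemma qq_vanish (hb : Bnds T lo hi) {k : ℕ} (hk : (hi - lo : ℤ) ≤ k) :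
    qq T lo hi k = 0 := by
  have hnth : k ≤ Nat.nth (PP T hi) k :=
    Nat.le_nth (fun hf => absurd hf (PP_infinite hb))
  have hx : xx T hi k ≤ lo := by unfold xx; omega
  unfold qq
  rw [Finset.Ioo_eq_empty (by omega : ¬ lo < xx T hi k)]
  simp

noncomputable def NN (lo hi : ℤ) : ℕ := (hi - lo).toNat

noncomputable def ofMaya (T : ℤ → Bool) (lo hi : ℤ) (hb : Bnds T lo hi) : YoungDiagram :=
  YoungDiagram.ofRowLens (List.ofFn fun k : Fin (NN lo hi) => qq T lo hi k) (by
    rw [List.sortedGE_iff_pairwise, List.pairwise_ofFn]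
    intro i j hij
    exact qq_anti hb (le_of_lt hij))

lemma rowLen_ofMaya (hb : Bnds T lo hi) (k : ℕ) :
    (ofMaya T lo hi hb).rowLen k = qq T lo hi k := by
  rcases lt_or_ge k (NN lo hi) with h | h
  · have hlen : k < (List.ofFn fun k : Fin (NN lo hi) => qq T lo hi k).length := by
      rw [List.length_ofFn]; exact h
    have := YoungDiagram.rowLen_ofRowLens (w := List.ofFn fun k : Fin (NN lo hi) => qq T lo hi k)
      (hw := by rw [List.sortedGE_iff_pairwise, List.pairwise_ofFn]; intro i j hij; exact qq_anti hb (le_of_lt hij))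
      ⟨k, hlen⟩
    unfold ofMaya
    rw [this]
    simp
  · have h0 : qq T lo hi k = 0 := qq_vanish hb (by unfold NN at h; omega)
    rw [h0]
    have hnot : ¬ ((k, 0) ∈ ofMaya T lo hi hb) := by
      unfold ofMaya
      rw [YoungDiagram.mem_ofRowLens]
      rintro ⟨hlen, -⟩
      rw [List.length_ofFn] at hlen
      omega
    rw [YoungDiagram.mem_iff_lt_rowLen] at hnot
    omega

noncomputable def dd (T : ℤ → Bool) (lo hi : ℤ) : ℤ := xx T hi 0 + 1 - qq T lo hi 0

lemma beta_ofMaya (hb : Bnds T lo hi) (k : ℕ) :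
    beta (ofMaya T lo hi hb) k = xx T hi k - dd T lo hi := by
  induction k with
  | zero =>
      unfold beta dd
      rw [rowLen_ofMaya hb]
      omega
  | succ k ih =>
      have hs := qq_succ hb k
      unfold beta at ih ⊢
      rw [rowLen_ofMaya hb] at ih ⊢
      omega

lemma SB_ofMaya (hb : Bnds T lo hi) (n : ℤ) :
    SB (ofMaya T lo hi hb) n = T (n + dd T lo hi) := by
  rw [Bool.eq_iff_iff, SB_iff]
  constructor
  · rintro ⟨k, hk⟩
    rw [beta_ofMaya hb k] at hk
    have hm := xx_mem hb k
    rw [show xx T hi k = n + dd T lo hi by omega] at hm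
    exact hm
  · intro hT
    obtain ⟨k, hk⟩ := xx_surj hb hT
    exact ⟨k, by rw [beta_ofMaya hb k, hk]; ring⟩

lemma mshift {T1 T2 : ℤ → Bool} {lo1 hi1 lo2 hi2 d : ℤ}
    (hb1 : Bnds T1 lo1 hi1) (hb2 : Bnds T2 lo2 hi2)
    (hT : ∀ n, T1 n = T2 (n + d)) (r : ℕ) :
    mcount r T1 lo1 hi1 = mcount r T2 lo2 hi2 ∧
    mprod r T1 lo1 hi1 = mprod r T2 lo2 hi2 := by
  classical
  have hmaps : ∀ pr ∈ (pairsOf T1 lo1 hi1).filter (fun pr => (r : ℤ) ∣ pr.1 - pr.2),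
      (pr.1 + d, pr.2 + d) ∈ (pairsOf T2 lo2 hi2).filter (fun pr => (r : ℤ) ∣ pr.1 - pr.2) := by
    intro pr hpr
    rw [Finset.mem_filter, mem_pairsOf hb1] at hpr
    obtain ⟨⟨h1, h2, h3⟩, h4⟩ := hpr
    rw [Finset.mem_filter, mem_pairsOf hb2]
    rw [hT pr.1] at h1
    rw [hT pr.2] at h2
    refine ⟨⟨h1, h2, by omega⟩, ?_⟩
    show (r : ℤ) ∣ pr.1 + d - (pr.2 + d)
    have he : pr.1 + d - (pr.2 + d) = pr.1 - pr.2 := by ring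
    rw [he]; exact h4
  have hmaps' : ∀ pr ∈ (pairsOf T2 lo2 hi2).filter (fun pr => (r : ℤ) ∣ pr.1 - pr.2),
      (pr.1 - d, pr.2 - d) ∈ (pairsOf T1 lo1 hi1).filter (fun pr => (r : ℤ) ∣ pr.1 - pr.2) := by
    intro pr hpr
    rw [Finset.mem_filter, mem_pairsOf hb2] at hpr
    obtain ⟨⟨h1, h2, h3⟩, h4⟩ := hpr
    rw [Finset.mem_filter, mem_pairsOf hb1]
    have e1 : pr.1 - d + d = pr.1 := by ring
    have e2 : pr.2 - d + d = pr.2 := by ring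
    refine ⟨⟨?_, ?_, by omega⟩, ?_⟩
    · rw [hT (pr.1 - d), e1]; exact h1
    · rw [hT (pr.2 - d), e2]; exact h2
    · show (r : ℤ) ∣ pr.1 - d - (pr.2 - d)
      have he : pr.1 - d - (pr.2 - d) = pr.1 - pr.2 := by ring
      rw [he]; exact h4
  have hleft : ∀ pr : ℤ × ℤ, ((pr.1 + d) - d, (pr.2 + d) - d) = pr := by
    intro pr; ext <;> simp
  have hright : ∀ pr : ℤ × ℤ, ((pr.1 - d) + d, (pr.2 - d) + d) = pr := by
    intro pr; ext <;> simp
  constructor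
  · exact Finset.card_nbij' (fun pr => (pr.1 + d, pr.2 + d)) (fun pr => (pr.1 - d, pr.2 - d))
      hmaps hmaps' (fun a _ => hleft a) (fun a _ => hright a)
  · refine Finset.prod_nbij' (fun pr => (pr.1 + d, pr.2 + d)) (fun pr => (pr.1 - d, pr.2 - d))
      hmaps hmaps' (fun a _ => hleft a) (fun a _ => hright a) ?_
    intro pr _
    show ((pr.1 - pr.2) / (r : ℤ)).toNat = ((pr.1 + d - (pr.2 + d)) / (r : ℤ)).toNat
    have he : pr.1 + d - (pr.2 + d) = pr.1 - pr.2 := by ring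
    rw [he]


lemma pairsOf_dc {T : ℤ → Bool} {lo hi : ℤ}
    (hdc : ∀ x y : ℤ, x ≤ y → T y = true → T x = true) :
    pairsOf T lo hi = ∅ := by
  rw [Finset.eq_empty_iff_forall_notMem]
  intro pr hpr
  unfold pairsOf at hpr
  rw [Finset.mem_filter] at hpr
  obtain ⟨-, h1, h2, h3⟩ := hpr
  exact h2 (hdc pr.2 pr.1 (le_of_lt h3) h1)

lemma bnds_res {T : ℤ → Bool} {lo hi : ℤ} (hb : Bnds T lo hi) {m : ℕ} (hm : 0 < m)
    {t : ℕ} (ht : t < m) : Bnds (fun x => T ((m : ℤ) * x + (t : ℤ))) (lo - m) hi where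
  lo0 := by have := hb.lo0; omega
  hi0 := hb.hi0
  hlo := fun x hx => by
    have hx0 : x ≤ 0 := by have := hb.lo0; omega
    have h1 : (m : ℤ) * x ≤ 1 * x :=
      mul_le_mul_of_nonpos_right (by omega : (1:ℤ) ≤ (m:ℤ)) hx0
    exact hb.hlo _ (by omega)
  hhi := fun x hx => by
    have hx0 : (0:ℤ) ≤ x := le_trans hb.hi0 hx
    have h1 : 1 * x ≤ (m : ℤ) * x :=
      mul_le_mul_of_nonneg_right (by omega : (1:ℤ) ≤ (m:ℤ)) hx0
    exact hb.hhi _ (by omega)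

lemma mdecomp {T : ℤ → Bool} {lo hi : ℤ} (hb : Bnds T lo hi) {m : ℕ} (hm : 0 < m) (r : ℕ) :
    mcount (r * m) T lo hi
      = ∑ t : Fin m, mcount r (fun x => T ((m : ℤ) * x + ((t : ℕ) : ℤ))) (lo - m) hi ∧
    mprod (r * m) T lo hi
      = ∏ t : Fin m, mprod r (fun x => T ((m : ℤ) * x + ((t : ℕ) : ℤ))) (lo - m) hi := by
  classical
  have hm' : ((m : ℤ)) ≠ 0 := by omega
  have hm0 : (0 : ℤ) < (m : ℤ) := by omega
  have hcast : ((r * m : ℕ) : ℤ) = (m : ℤ) * (r : ℤ) := by push_cast; ring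
  set s := (pairsOf T lo hi).filter (fun pr => ((r * m : ℕ) : ℤ) ∣ pr.1 - pr.2) with hs
  set tt := (Finset.univ : Finset (Fin m)).sigma
      (fun t => (pairsOf (fun x => T ((m : ℤ) * x + ((t : ℕ) : ℤ))) (lo - m) hi).filter
        (fun pr => (r : ℤ) ∣ pr.1 - pr.2)) with htt
  have hmlt : ∀ z : ℤ, (z % (m : ℤ)).toNat < m := by
    intro z
    have h1 := Int.emod_nonneg z hm'
    have h2 := Int.emod_lt_of_pos z hm0
    omega
  set F : ℤ × ℤ → Σ _ : Fin m, ℤ × ℤ :=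
    fun pr => ⟨⟨(pr.1 % (m : ℤ)).toNat, hmlt pr.1⟩, (pr.1 / (m : ℤ), pr.2 / (m : ℤ))⟩ with hF
  set G : (Σ _ : Fin m, ℤ × ℤ) → ℤ × ℤ :=
    fun w => ((m : ℤ) * w.2.1 + ((w.1 : ℕ) : ℤ), (m : ℤ) * w.2.2 + ((w.1 : ℕ) : ℤ)) with hG
  have hsfact : ∀ pr : ℤ × ℤ, pr ∈ s →
      T pr.1 = true ∧ ¬ T pr.2 = true ∧ pr.2 < pr.1 ∧ (((r * m : ℕ) : ℤ) ∣ pr.1 - pr.2)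
        ∧ pr.2 % (m : ℤ) = pr.1 % (m : ℤ) := by
    intro pr hpr
    rw [hs, Finset.mem_filter, mem_pairsOf hb] at hpr
    obtain ⟨⟨h1, h2, h3⟩, h4⟩ := hpr
    refine ⟨h1, h2, h3, h4, ?_⟩
    have hmd : (m : ℤ) ∣ pr.1 - pr.2 :=
      dvd_trans ⟨(r : ℤ), by push_cast; ring⟩ h4
    exact Int.modEq_iff_dvd.2 hmd
  have hFmem : ∀ pr ∈ s, F pr ∈ tt := by
    intro pr hpr
    obtain ⟨h1, h2, h3, h4, h5⟩ := hsfact pr hpr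
    have h0 := Int.emod_nonneg pr.1 hm'
    have e1 : (m : ℤ) * (pr.1 / (m:ℤ)) + (((pr.1 % (m:ℤ)).toNat : ℕ) : ℤ) = pr.1 := by
      have := Int.mul_ediv_add_emod pr.1 (m : ℤ)
      omega
    have e2 : (m : ℤ) * (pr.2 / (m:ℤ)) + (((pr.1 % (m:ℤ)).toNat : ℕ) : ℤ) = pr.2 := by
      have := Int.mul_ediv_add_emod pr.2 (m : ℤ)
      omega
    have hdiff : pr.1 - pr.2 = (m:ℤ) * (pr.1/(m:ℤ) - pr.2/(m:ℤ)) := by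
      rw [mul_sub]; linarith
    rw [htt, Finset.mem_sigma]
    refine ⟨Finset.mem_univ _, ?_⟩
    rw [Finset.mem_filter, mem_pairsOf (bnds_res hb hm (hmlt pr.1))]
    refine ⟨⟨?_, ?_, ?_⟩, ?_⟩
    · show T ((m:ℤ) * (pr.1 / (m:ℤ)) + _) = true
      rw [e1]; exact h1
    · show ¬ T ((m:ℤ) * (pr.2 / (m:ℤ)) + _) = true
      rw [e2]; exact h2
    · show pr.2 / (m:ℤ) < pr.1 / (m:ℤ)
      by_contra hcon
      have : (m:ℤ) * (pr.1/(m:ℤ)) ≤ (m:ℤ) * (pr.2/(m:ℤ)) :=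
        mul_le_mul_of_nonneg_left (by omega) (by omega)
      linarith
    · show (r : ℤ) ∣ pr.1 / (m:ℤ) - pr.2 / (m:ℤ)
      rw [hcast] at h4
      rw [hdiff] at h4
      exact (mul_dvd_mul_iff_left hm').1 h4
  have hGmem : ∀ w ∈ tt, G w ∈ s := by
    intro w hw
    rw [htt, Finset.mem_sigma] at hw
    obtain ⟨-, hw⟩ := hw
    rw [Finset.mem_filter, mem_pairsOf (bnds_res hb hm w.1.isLt)] at hw
    obtain ⟨⟨h1, h2, h3⟩, h4⟩ := hw
    rw [hs, Finset.mem_filter, mem_pairsOf hb]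
    have hlt : (m:ℤ) * w.2.2 < (m:ℤ) * w.2.1 := mul_lt_mul_of_pos_left h3 hm0
    refine ⟨⟨h1, h2, by show (m:ℤ) * w.2.2 + _ < (m:ℤ) * w.2.1 + _; linarith⟩, ?_⟩
    show ((r * m : ℕ) : ℤ) ∣ (m:ℤ) * w.2.1 + ((w.1 : ℕ) : ℤ) - ((m:ℤ) * w.2.2 + ((w.1 : ℕ) : ℤ))
    have he : (m:ℤ) * w.2.1 + ((w.1:ℕ):ℤ) - ((m:ℤ) * w.2.2 + ((w.1:ℕ):ℤ))
        = (m:ℤ) * (w.2.1 - w.2.2) := by ring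
    rw [he, hcast]
    exact mul_dvd_mul_left _ h4
  have hGF : ∀ pr ∈ s, G (F pr) = pr := by
    intro pr hpr
    obtain ⟨-, -, -, -, h5⟩ := hsfact pr hpr
    have h0 := Int.emod_nonneg pr.1 hm'
    have e1 := Int.mul_ediv_add_emod pr.1 (m:ℤ)
    have e2 := Int.mul_ediv_add_emod pr.2 (m:ℤ)
    show ((m:ℤ) * (pr.1 / (m:ℤ)) + (((pr.1 % (m:ℤ)).toNat : ℕ) : ℤ),
      (m:ℤ) * (pr.2 / (m:ℤ)) + (((pr.1 % (m:ℤ)).toNat : ℕ) : ℤ)) = pr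
    have hc : (((pr.1 % (m:ℤ)).toNat : ℕ) : ℤ) = pr.1 % (m:ℤ) := by omega
    rw [hc]
    refine Prod.ext ?_ ?_
    · show ((m:ℤ) * (pr.1 / (m:ℤ)) + pr.1 % (m:ℤ)) = pr.1
      linarith
    · show ((m:ℤ) * (pr.2 / (m:ℤ)) + pr.1 % (m:ℤ)) = pr.2
      linarith
  have hFG : ∀ w ∈ tt, F (G w) = w := by
    intro w _
    have htlt : ((w.1 : ℕ) : ℤ) < (m:ℤ) := by exact_mod_cast w.1.isLt
    have ht0 : (0:ℤ) ≤ ((w.1:ℕ):ℤ) := by positivity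
    have hemod : ∀ v : ℤ, ((m:ℤ) * v + ((w.1:ℕ):ℤ)) % (m:ℤ) = ((w.1:ℕ):ℤ) := by
      intro v
      rw [add_comm, Int.add_mul_emod_self_left]
      exact Int.emod_eq_of_lt ht0 htlt
    have hediv : ∀ v : ℤ, ((m:ℤ) * v + ((w.1:ℕ):ℤ)) / (m:ℤ) = v := by
      intro v
      rw [add_comm, Int.add_mul_ediv_left _ _ hm', Int.ediv_eq_zero_of_lt ht0 htlt]
      ring
    apply Sigma.ext
    · apply Fin.ext
      show ((((m:ℤ) * w.2.1 + ((w.1:ℕ):ℤ)) % (m:ℤ)).toNat) = ((w.1 : ℕ) : ℕ)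
      rw [hemod]
      omega
    · show HEq (((m:ℤ) * w.2.1 + ((w.1:ℕ):ℤ)) / (m:ℤ),
        ((m:ℤ) * w.2.2 + ((w.1:ℕ):ℤ)) / (m:ℤ)) w.2
      rw [hediv, hediv]
  have hval : ∀ pr ∈ s, ((pr.1 - pr.2) / ((r * m : ℕ) : ℤ)).toNat
      = ((pr.1 / (m:ℤ) - pr.2 / (m:ℤ)) / (r : ℤ)).toNat := by
    intro pr hpr
    obtain ⟨-, -, -, h4, h5⟩ := hsfact pr hpr
    have e1 := Int.mul_ediv_add_emod pr.1 (m:ℤ)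
    have e2 := Int.mul_ediv_add_emod pr.2 (m:ℤ)
    have hdiff : pr.1 - pr.2 = (m:ℤ) * (pr.1/(m:ℤ) - pr.2/(m:ℤ)) := by
      rw [mul_sub]; linarith
    rw [hdiff, hcast, Int.mul_ediv_mul_of_pos _ _ hm0]
  have hcard : s.card = tt.card := Finset.card_nbij' F G hFmem hGmem hGF hFG
  have hprodeq : (∏ pr ∈ s, ((pr.1 - pr.2) / ((r * m : ℕ) : ℤ)).toNat)
      = ∏ w ∈ tt, ((w.2.1 - w.2.2) / (r : ℤ)).toNat :=
    Finset.prod_nbij' F G hFmem hGmem hGF hFG hval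
  constructor
  · show s.card = _
    rw [hcard, htt, Finset.card_sigma]
    rfl
  · show (∏ pr ∈ s, ((pr.1 - pr.2) / ((r * m : ℕ) : ℤ)).toNat) = _
    rw [hprodeq, htt, Finset.prod_sigma]
    rfl

lemma quotient_exists (ν : YoungDiagram) {m : ℕ} (hm : 0 < m) :
    ∃ Q : Fin m → YoungDiagram, ∀ r : ℕ,
      hookCount (r * m) ν = ∑ t, hookCount r (Q t) ∧
      hookProd (r * m) ν = ∏ t, hookProd r (Q t) := by
  refine ⟨fun t => ofMaya (fun x => SB ν ((m : ℤ) * x + ((t : ℕ) : ℤ))) (loY ν - m) (hiY ν)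
      (bnds_res (bnds_SB ν) hm t.isLt), ?_⟩
  intro r
  have hdec := mdecomp (bnds_SB ν) hm r
  have hbr := bridge ν (r * m)
  have hcomp : ∀ t : Fin m,
      hookCount r (ofMaya (fun x => SB ν ((m : ℤ) * x + ((t : ℕ) : ℤ))) (loY ν - m) (hiY ν)
          (bnds_res (bnds_SB ν) hm t.isLt))
        = mcount r (fun x => SB ν ((m : ℤ) * x + ((t : ℕ) : ℤ))) (loY ν - m) (hiY ν) ∧
      hookProd r (ofMaya (fun x => SB ν ((m : ℤ) * x + ((t : ℕ) : ℤ))) (loY ν - m) (hiY ν)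
          (bnds_res (bnds_SB ν) hm t.isLt))
        = mprod r (fun x => SB ν ((m : ℤ) * x + ((t : ℕ) : ℤ))) (loY ν - m) (hiY ν) := by
    intro t
    have hb1 := bnds_SB (ofMaya (fun x => SB ν ((m : ℤ) * x + ((t : ℕ) : ℤ))) (loY ν - m)
      (hiY ν) (bnds_res (bnds_SB ν) hm t.isLt))
    have hsh := mshift hb1 (bnds_res (bnds_SB ν) hm t.isLt)
      (SB_ofMaya (bnds_res (bnds_SB ν) hm t.isLt)) r
    have hbr2 := bridge (ofMaya (fun x => SB ν ((m : ℤ) * x + ((t : ℕ) : ℤ))) (loY ν - m)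
      (hiY ν) (bnds_res (bnds_SB ν) hm t.isLt)) r
    exact ⟨hbr2.1.trans hsh.1, hbr2.2.trans hsh.2⟩
  constructor
  · rw [hbr.1, hdec.1]
    exact Finset.sum_congr rfl fun t _ => ((hcomp t).1).symm
  · rw [hbr.2, hdec.2]
    exact Finset.prod_congr rfl fun t _ => ((hcomp t).2).symm

lemma blowup_exists (μ : YoungDiagram) {m : ℕ} (hm : 0 < m) :
    ∃ lam : YoungDiagram, ∀ s : ℕ,
      hookCount (s * m) lam = hookCount s μ ∧ hookProd (s * m) lam = hookProd s μ := by
  classical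
  have hm' : ((m : ℤ)) ≠ 0 := by omega
  have hm0 : (0 : ℤ) < (m : ℤ) := by omega
  set T : ℤ → Bool :=
    fun x => if (m : ℤ) ∣ x then SB μ (x / (m:ℤ)) else decide (x < 0) with hT
  have hbS := bnds_SB μ
  have hTmul : ∀ y : ℤ, T ((m:ℤ) * y) = SB μ y := by
    intro y
    rw [hT]
    dsimp only
    rw [if_pos ⟨y, rfl⟩, Int.mul_ediv_cancel_left _ hm']
  have hTnd : ∀ x : ℤ, ¬ ((m:ℤ) ∣ x) → T x = decide (x < 0) := by
    intro x hx
    rw [hT]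
    dsimp only
    rw [if_neg hx]
  have hbT : Bnds T ((m:ℤ) * loY μ) ((m:ℤ) * hiY μ) := by
    have hlo0 : (m:ℤ) * loY μ < 0 := mul_neg_of_pos_of_neg hm0 hbS.lo0
    have hhi0 : (0:ℤ) ≤ (m:ℤ) * hiY μ := mul_nonneg (by omega) hbS.hi0
    refine ⟨hlo0, hhi0, ?_, ?_⟩
    · intro x hx
      rw [hT]
      dsimp only
      split_ifs with hdvd
      · obtain ⟨y, rfl⟩ := hdvd
        rw [Int.mul_ediv_cancel_left _ hm']
        exact hbS.hlo y (le_of_mul_le_mul_left hx hm0)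
      · simp only [decide_eq_true_eq]
        linarith
    · intro x hx
      rw [hT]
      dsimp only
      split_ifs with hdvd
      · obtain ⟨y, rfl⟩ := hdvd
        rw [Int.mul_ediv_cancel_left _ hm']
        exact hbS.hhi y (le_of_mul_le_mul_left hx hm0)
      · simp only [decide_eq_false_iff_not, not_lt]
        linarith
  refine ⟨ofMaya T ((m:ℤ) * loY μ) ((m:ℤ) * hiY μ) hbT, ?_⟩
  intro s
  have hbr := bridge (ofMaya T ((m:ℤ) * loY μ) ((m:ℤ) * hiY μ) hbT) (s * m)
  have hsh := mshift (bnds_SB (ofMaya T ((m:ℤ) * loY μ) ((m:ℤ) * hiY μ) hbT)) hbT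
    (SB_ofMaya hbT) (s * m)
  have hdec := mdecomp hbT hm s
  -- zero component
  have hzero : ∀ t : Fin m, (t : ℕ) ≠ 0 →
      (pairsOf (fun x => T ((m : ℤ) * x + ((t : ℕ) : ℤ))) ((m:ℤ) * loY μ - m) ((m:ℤ) * hiY μ))
        = ∅ := by
    intro t ht
    apply pairsOf_dc
    intro x y hxy hTy
    have hnd : ∀ v : ℤ, ¬ ((m:ℤ) ∣ (m:ℤ) * v + ((t : ℕ) : ℤ)) := by
      intro v hdvd
      have : (m:ℤ) ∣ ((t : ℕ) : ℤ) := (dvd_add_right ⟨v, rfl⟩).1 hdvd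
      have h1 := Int.le_of_dvd (by exact_mod_cast Nat.pos_of_ne_zero ht) this
      have h2 : ((t : ℕ) : ℤ) < (m:ℤ) := by exact_mod_cast t.isLt
      omega
    rw [hTnd _ (hnd y)] at hTy
    rw [hTnd _ (hnd x)]
    simp only [decide_eq_true_eq] at hTy ⊢
    have : (m:ℤ) * x ≤ (m:ℤ) * y := mul_le_mul_of_nonneg_left hxy (by omega)
    linarith
  have hzc : ∀ t : Fin m, (t : ℕ) ≠ 0 →
      mcount s (fun x => T ((m : ℤ) * x + ((t : ℕ) : ℤ))) ((m:ℤ) * loY μ - m) ((m:ℤ) * hiY μ) = 0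
      ∧ mprod s (fun x => T ((m : ℤ) * x + ((t : ℕ) : ℤ))) ((m:ℤ) * loY μ - m) ((m:ℤ) * hiY μ) = 1 := by
    intro t ht
    unfold mcount mprod
    rw [hzero t ht]
    simp
  -- main component
  have hmain :
      mcount s (fun x => T ((m : ℤ) * x + (((⟨0, hm⟩ : Fin m) : ℕ) : ℤ))) ((m:ℤ) * loY μ - m) ((m:ℤ) * hiY μ)
        = hookCount s μ ∧
      mprod s (fun x => T ((m : ℤ) * x + (((⟨0, hm⟩ : Fin m) : ℕ) : ℤ))) ((m:ℤ) * loY μ - m) ((m:ℤ) * hiY μ)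
        = hookProd s μ := by
    have hfun : ∀ n : ℤ, T ((m : ℤ) * n + (((⟨0, hm⟩ : Fin m) : ℕ) : ℤ)) = SB μ (n + 0) := by
      intro n
      rw [add_zero]
      show T ((m:ℤ) * n + ((0 : ℕ) : ℤ)) = SB μ n
      rw [show ((0 : ℕ) : ℤ) = 0 by rfl, add_zero]
      exact hTmul n
    have hsh2 := mshift (bnds_res hbT hm (show (0:ℕ) < m from hm)) (bnds_SB μ) hfun s
    have hbr2 := bridge μ s
    exact ⟨hsh2.1.trans hbr2.1.symm, hsh2.2.trans hbr2.2.symm⟩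
  constructor
  · rw [hbr.1, hsh.1, hdec.1]
    rw [Finset.sum_eq_single (⟨0, hm⟩ : Fin m)]
    · exact hmain.1
    · intro b _ hb
      refine (hzc b ?_).1
      intro hb0
      exact hb (Fin.ext hb0)
    · intro h
      exact absurd (Finset.mem_univ _) h
  · rw [hbr.2, hsh.2, hdec.2]
    rw [Finset.prod_eq_single (⟨0, hm⟩ : Fin m)]
    · exact hmain.2
    · intro b _ hb
      refine (hzc b ?_).2
      intro hb0
      exact hb (Fin.ext hb0)
    · intro h
      exact absurd (Finset.mem_univ _) h


def BB (ν : YoungDiagram) : ℕ := ν.rowLen 0 + ν.colLen 0 + 1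

lemma hook_lt_BB {ν : YoungDiagram} {i j : ℕ} (h : (i, j) ∈ ν) :
    hookLength ν i j < BB ν := by
  have h1 := ν.rowLen_anti 0 i (Nat.zero_le i)
  have h2 := ν.colLen_anti 0 j (Nat.zero_le j)
  unfold hookLength BB; omega

lemma BB_pos (ν : YoungDiagram) : 0 < BB ν := by unfold BB; omega

lemma hookCount_eq_zero {ν : YoungDiagram} {r : ℕ} (h : BB ν ≤ r) : hookCount r ν = 0 := by
  unfold hookCount
  rw [Finset.card_eq_zero, Finset.filter_eq_empty_iff]
  intro c hc
  have hmem : (c.1, c.2) ∈ ν := (YoungDiagram.mem_cells _).1 hc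
  intro hdvd
  have h1 := hook_pos hmem
  have h2 := hook_lt_BB hmem
  have h3 := Nat.le_of_dvd h1 hdvd
  omega

lemma hookProd_ne_zero (ν : YoungDiagram) {r : ℕ} (hr : 0 < r) : hookProd r ν ≠ 0 := by
  unfold hookProd
  rw [Finset.prod_ne_zero_iff]
  intro c hc
  rw [Finset.mem_filter] at hc
  have h1 := hook_pos ((YoungDiagram.mem_cells _).1 hc.1)
  have h2 := Nat.div_pos (Nat.le_of_dvd h1 hc.2) hr
  omega

lemma factorization_card {p : ℕ} (hp : p.Prime) {n J : ℕ} (hn : 0 < n) (hnJ : n < p ^ J) :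
    n.factorization p = ((Finset.Icc 1 J).filter (fun j => p ^ j ∣ n)).card := by
  classical
  set v := n.factorization p with hv
  have hvJ : v < J := by
    by_contra hcon
    have hd : p ^ J ∣ n := (Nat.Prime.pow_dvd_iff_le_factorization hp hn.ne').2 (by omega)
    have := Nat.le_of_dvd hn hd
    omega
  have heq : (Finset.Icc 1 J).filter (fun j => p ^ j ∣ n) = Finset.Icc 1 v := by
    ext j
    simp only [Finset.mem_filter, Finset.mem_Icc]
    constructor
    · rintro ⟨⟨hj1, hj2⟩, hd⟩
      exact ⟨hj1, (Nat.Prime.pow_dvd_iff_le_factorization hp hn.ne').1 hd⟩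
    · rintro ⟨hj1, hj2⟩
      exact ⟨⟨hj1, by omega⟩, (Nat.Prime.pow_dvd_iff_le_factorization hp hn.ne').2 hj2⟩
  rw [heq, Nat.card_Icc]
  omega

lemma valuation (ν : YoungDiagram) {r : ℕ} (hr : 0 < r) {p : ℕ} (hp : p.Prime)
    {J : ℕ} (hJ : BB ν ≤ p ^ J) :
    (hookProd r ν).factorization p = ∑ j ∈ Finset.Icc 1 J, hookCount (r * p ^ j) ν := by
  classical
  have hfac : ∀ c ∈ ν.cells.filter (fun c => r ∣ hookLength ν c.1 c.2),
      hookLength ν c.1 c.2 / r ≠ 0 := by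
    intro c hc
    rw [Finset.mem_filter] at hc
    have h1 := hook_pos ((YoungDiagram.mem_cells _).1 hc.1)
    have := Nat.div_pos (Nat.le_of_dvd h1 hc.2) hr
    omega
  have step1 : (hookProd r ν).factorization p
      = ∑ c ∈ ν.cells.filter (fun c => r ∣ hookLength ν c.1 c.2),
          (hookLength ν c.1 c.2 / r).factorization p := by
    unfold hookProd
    rw [Nat.factorization_prod hfac]
    exact Finset.sum_apply' p
  rw [step1]
  have step2 : ∀ c ∈ ν.cells.filter (fun c => r ∣ hookLength ν c.1 c.2),
      (hookLength ν c.1 c.2 / r).factorization p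
        = ∑ j ∈ Finset.Icc 1 J, (if p ^ j ∣ hookLength ν c.1 c.2 / r then 1 else 0) := by
    intro c hc
    rw [Finset.mem_filter] at hc
    have hmem := (YoungDiagram.mem_cells _).1 hc.1
    have hpos := hook_pos hmem
    have hdp : 0 < hookLength ν c.1 c.2 / r := Nat.div_pos (Nat.le_of_dvd hpos hc.2) hr
    have hlt : hookLength ν c.1 c.2 / r < p ^ J :=
      lt_of_le_of_lt (Nat.div_le_self _ _) (lt_of_lt_of_le (hook_lt_BB hmem) hJ)
    rw [factorization_card hp hdp hlt, Finset.card_filter]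
  rw [Finset.sum_congr rfl step2, Finset.sum_comm]
  apply Finset.sum_congr rfl
  intro j _
  rw [← Finset.card_filter, Finset.filter_filter]
  unfold hookCount
  congr 1
  apply Finset.filter_congr
  intro c _
  constructor
  · rintro ⟨hA, hB⟩
    exact (Nat.dvd_div_iff_mul_dvd hA).1 hB
  · intro hD
    have hA : r ∣ hookLength ν c.1 c.2 := dvd_trans (dvd_mul_right r _) hD
    exact ⟨hA, (Nat.dvd_div_iff_mul_dvd hA).2 hD⟩

end HookThm

open HookThm in
theorem stmt_0 (K L : ℕ) (hK : 0 < K) (hL : 0 < L)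
    (γ : Fin K → ℕ) (δ : Fin L → ℕ) (hγ : ∀ k, 0 < γ k) (hδ : ∀ l, 0 < δ l) :
    (∀ lam : YoungDiagram, (∏ l, hookProd (δ l) lam) ∣ ∏ k, hookProd (γ k) lam) ↔
    (∀ μ : YoungDiagram,
      0 ≤ (∑ k, (hookCount (γ k) μ : ℤ)) - ∑ l, (hookCount (δ l) μ : ℤ)) := by
  have hprodδ : ∀ lam : YoungDiagram, (∏ l, hookProd (δ l) lam) ≠ 0 :=
    fun lam => Finset.prod_ne_zero_iff.2 fun l _ => hookProd_ne_zero lam (hδ l)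
  have hprodγ : ∀ lam : YoungDiagram, (∏ k, hookProd (γ k) lam) ≠ 0 :=
    fun lam => Finset.prod_ne_zero_iff.2 fun k _ => hookProd_ne_zero lam (hγ k)
  constructor
  · intro hdvd μ
    obtain ⟨p, hpB, hp⟩ := Nat.exists_infinite_primes (BB μ + 1)
    obtain ⟨lam, hlam⟩ := blowup_exists μ hp.pos
    set J := BB lam with hJdef
    have hJ : BB lam ≤ p ^ J := by
      calc BB lam ≤ 2 ^ BB lam := le_of_lt (Nat.lt_two_pow_self (n := BB lam))
        _ ≤ p ^ J := Nat.pow_le_pow_left hp.two_le _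
    have hJ1 : 1 ≤ J := by have := BB_pos lam; omega
    have hcomp : ∀ n : ℕ, 0 < n →
        (hookProd n lam).factorization p = hookCount n μ := by
      intro n hn
      rw [valuation lam hn hp hJ]
      rw [Finset.sum_eq_single 1]
      · rw [pow_one]; exact (hlam n).1
      · intro j hj hne
        rw [Finset.mem_Icc] at hj
        have he : n * p ^ j = (n * p ^ (j - 1)) * p := by
          rw [mul_assoc, ← pow_succ, Nat.sub_add_cancel (by omega : 1 ≤ j)]
        rw [he, (hlam _).1]
        apply hookCount_eq_zero
        calc BB μ ≤ p := by omega
          _ ≤ p ^ (j - 1) := Nat.le_self_pow (by omega) p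
          _ ≤ n * p ^ (j - 1) := Nat.le_mul_of_pos_left _ hn
      · intro h1
        exact absurd (Finset.mem_Icc.2 ⟨le_refl 1, hJ1⟩) h1
    have hfac := (Nat.factorization_le_iff_dvd (hprodδ lam) (hprodγ lam)).2 (hdvd lam)
    have hfp := Finsupp.le_def.1 hfac p
    rw [Nat.factorization_prod (fun l _ => hookProd_ne_zero lam (hδ l)),
        Nat.factorization_prod (fun k _ => hookProd_ne_zero lam (hγ k)),
        Finset.sum_apply', Finset.sum_apply'] at hfp
    rw [Finset.sum_congr rfl (fun l _ => hcomp (δ l) (hδ l)),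
        Finset.sum_congr rfl (fun k _ => hcomp (γ k) (hγ k))] at hfp
    rw [sub_nonneg]
    exact_mod_cast hfp
  · intro hineq lam
    have hnat : ∀ ν : YoungDiagram,
        ∑ l, hookCount (δ l) ν ≤ ∑ k, hookCount (γ k) ν := by
      intro ν
      have := hineq ν
      rw [sub_nonneg] at this
      exact_mod_cast this
    rw [← Nat.factorization_le_iff_dvd (hprodδ lam) (hprodγ lam)]
    rw [Finsupp.le_def]
    intro p
    by_cases hp : p.Prime
    · set J := BB lam with hJdef
      have hJ : BB lam ≤ p ^ J := by
        calc BB lam ≤ 2 ^ BB lam := le_of_lt (Nat.lt_two_pow_self (n := BB lam))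
          _ ≤ p ^ J := Nat.pow_le_pow_left hp.two_le _
      rw [Nat.factorization_prod (fun l _ => hookProd_ne_zero lam (hδ l)),
          Nat.factorization_prod (fun k _ => hookProd_ne_zero lam (hγ k)),
          Finset.sum_apply', Finset.sum_apply']
      calc ∑ l, (hookProd (δ l) lam).factorization p
          = ∑ l, ∑ j ∈ Finset.Icc 1 J, hookCount (δ l * p ^ j) lam :=
            Finset.sum_congr rfl fun l _ => valuation lam (hδ l) hp hJ
        _ = ∑ j ∈ Finset.Icc 1 J, ∑ l, hookCount (δ l * p ^ j) lam := Finset.sum_comm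
        _ ≤ ∑ j ∈ Finset.Icc 1 J, ∑ k, hookCount (γ k * p ^ j) lam := by
            apply Finset.sum_le_sum
            intro j _
            obtain ⟨Q, hQ⟩ := quotient_exists lam (pow_pos hp.pos j)
            calc ∑ l, hookCount (δ l * p ^ j) lam
                = ∑ l, ∑ t, hookCount (δ l) (Q t) :=
                  Finset.sum_congr rfl fun l _ => (hQ (δ l)).1
              _ = ∑ t, ∑ l, hookCount (δ l) (Q t) := Finset.sum_comm
              _ ≤ ∑ t, ∑ k, hookCount (γ k) (Q t) :=
                  Finset.sum_le_sum fun t _ => hnat (Q t)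
              _ = ∑ k, ∑ t, hookCount (γ k) (Q t) := Finset.sum_comm
              _ = ∑ k, hookCount (γ k * p ^ j) lam :=
                  Finset.sum_congr rfl fun k _ => ((hQ (γ k)).1).symm
        _ = ∑ k, ∑ j ∈ Finset.Icc 1 J, hookCount (γ k * p ^ j) lam := Finset.sum_comm
        _ = ∑ k, (hookProd (γ k) lam).factorization p :=
            Finset.sum_congr rfl fun k _ => (valuation lam (hγ k) hp hJ).symm
    · simp [Nat.factorization_eq_zero_of_not_prime _ hp]
end

section
/- Let s and t be positive integers. Then for every partition λ, the integer H_{st}(λ)^t divides H_s(λ); that is, H_s(λ) / (H_{st}(λ))^t is an integer. -/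
open Finset

/-! ### Abacus pair counting -/

/-- number of pairs `(b, x)` with `b ∈ S`, `x ∉ S`, `x < b`, `q ∣ b - x`. -/
def NP (q : ℕ) (S : Finset ℕ) : ℕ :=
  ∑ b ∈ S, ((Finset.range b).filter (fun x => x ∉ S ∧ q ∣ b - x)).card

/-- the runner `c` of `S` on the `r`-abacus. -/
def RN (r c : ℕ) (S : Finset ℕ) : Finset ℕ :=
  (S.filter (fun b => b % r = c)).image (· / r)

lemma mem_RN {r c : ℕ} (hc : c < r) {S : Finset ℕ} {y : ℕ} :
    y ∈ RN r c S ↔ r * y + c ∈ S := by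
  constructor
  · rintro hy
    simp only [RN, Finset.mem_image, Finset.mem_filter] at hy
    obtain ⟨b, ⟨hbS, hbr⟩, hby⟩ := hy
    have := Nat.div_add_mod b r
    rw [hby, hbr] at this
    rwa [this]
  · intro h
    simp only [RN, Finset.mem_image, Finset.mem_filter]
    refine ⟨r * y + c, ⟨h, ?_⟩, ?_⟩
    · simp [Nat.mul_add_mod, Nat.mod_eq_of_lt hc]
    · rw [Nat.mul_add_div (by omega), Nat.div_eq_of_lt hc]; omega

lemma injOn_div_runner {r c : ℕ} (hr : 0 < r) (S : Finset ℕ) :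
    Set.InjOn (· / r) ↑(S.filter (fun b => b % r = c)) := by
  intro a ha b hb hab
  simp only [Finset.coe_filter, Set.mem_setOf_eq] at ha hb
  have h1 := Nat.div_add_mod a r
  have h2 := Nat.div_add_mod b r
  simp only at hab
  rw [hab] at h1
  omega

lemma runner_card {r : ℕ} (hr : 0 < r) (S : Finset ℕ) :
    S.card = ∑ c ∈ Finset.range r, (RN r c S).card := by
  rw [Finset.card_eq_sum_card_fiberwise (f := fun b => b % r) (t := Finset.range r)
    (fun x _ => Finset.mem_range.2 (Nat.mod_lt _ hr))]
  refine Finset.sum_congr rfl fun c _ => ?_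
  rw [RN, Finset.card_image_of_injOn (injOn_div_runner hr S)]

lemma runner_NP {r : ℕ} (hr : 0 < r) (q : ℕ) (S : Finset ℕ) :
    NP (r * q) S = ∑ c ∈ Finset.range r, NP q (RN r c S) := by
  rw [NP, ← Finset.sum_fiberwise_of_maps_to (g := fun b => b % r) (t := Finset.range r)
    (fun x _ => Finset.mem_range.2 (Nat.mod_lt _ hr))]
  refine Finset.sum_congr rfl fun c hc => ?_
  have hc' : c < r := Finset.mem_range.1 hc
  have hsum : NP q (RN r c S) = ∑ b ∈ S.filter (fun b => b % r = c),
      ((Finset.range (b / r)).filter (fun x => x ∉ RN r c S ∧ q ∣ b / r - x)).card := by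
    rw [NP, show RN r c S = (S.filter (fun b => b % r = c)).image (· / r) from rfl,
      Finset.sum_image (fun a ha b hb hab => injOn_div_runner hr S ha hb hab)]
  rw [hsum]
  refine Finset.sum_congr rfl fun b hb => ?_
  simp only [Finset.mem_filter] at hb
  obtain ⟨hbS, hbc⟩ := hb
  -- bijection between the two inner sets via x ↦ x / r, inverse x' ↦ r * x' + c
  refine Finset.card_bij' (fun x _ => x / r) (fun x' _ => r * x' + c) ?_ ?_ ?_ ?_
  · -- maps to
    intro x hx
    simp only [Finset.mem_filter, Finset.mem_range] at hx ⊢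
    obtain ⟨hxb, hxS, hdvd⟩ := hx
    have hrd : r ∣ b - x := dvd_trans ⟨q, rfl⟩ hdvd
    have hxc : x % r = c := by
      obtain ⟨k, hk⟩ := hrd
      have : b = x + r * k := by omega
      subst this
      rw [Nat.add_mul_mod_self_left] at hbc; exact hbc
    have hxd := Nat.div_add_mod x r
    have hbd := Nat.div_add_mod b r
    have hlt : x / r < b / r := by
      rcases Nat.lt_or_ge (x / r) (b / r) with h | h
      · exact h
      · exfalso; nlinarith [Nat.mul_le_mul_left r h]
    refine ⟨hlt, ?_, ?_⟩
    · rw [mem_RN hc']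
      intro hmem
      have : r * (x / r) + c = x := by omega
      rw [this] at hmem; exact hxS hmem
    · have hsub : b - x = r * (b / r - x / r) := by
        rw [Nat.mul_sub]; omega
      rw [hsub] at hdvd
      exact (mul_dvd_mul_iff_left (by omega : r ≠ 0)).1 hdvd
  · -- inverse maps to
    intro x' hx'
    simp only [Finset.mem_filter, Finset.mem_range] at hx' ⊢
    obtain ⟨hlt, hnotmem, hdvd⟩ := hx'
    have hbd := Nat.div_add_mod b r
    refine ⟨by nlinarith [Nat.mul_le_mul_left r hlt], ?_, ?_⟩
    · rw [mem_RN hc'] at hnotmem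
      intro hmem; exact hnotmem hmem
    · have : b - (r * x' + c) = r * (b / r - x') := by
        rw [Nat.mul_sub]; omega
      rw [this]
      exact mul_dvd_mul_left r hdvd
  · -- left inverse
    intro x hx
    simp only [Finset.mem_filter, Finset.mem_range] at hx
    obtain ⟨hxb, hxS, hdvd⟩ := hx
    have hrd : r ∣ b - x := dvd_trans ⟨q, rfl⟩ hdvd
    have hxc : x % r = c := by
      obtain ⟨k, hk⟩ := hrd
      have : b = x + r * k := by omega
      subst this
      rw [Nat.add_mul_mod_self_left] at hbc; exact hbc
    have := Nat.div_add_mod x r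
    omega
  · -- right inverse
    intro x' _
    rw [Nat.mul_add_div (by omega), Nat.div_eq_of_lt hc']; omega

lemma sum_filter_lt (S : Finset ℕ) :
    ∑ b ∈ S, (S.filter (· < b)).card = (S.card).choose 2 := by
  induction S using Finset.induction_on_max with
  | empty => simp
  | insert a s ha ih =>
    have has : a ∈ s → False := fun h => lt_irrefl a (ha a h)
    rw [Finset.sum_insert (fun h => has h)]
    have h1 : (insert a s).filter (· < a) = s := by
      ext x
      simp only [Finset.mem_filter, Finset.mem_insert]
      constructor
      · rintro ⟨h | h, hlt⟩
        · omega
        · exact h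
      · intro h; exact ⟨Or.inr h, ha x h⟩
    have h2 : ∀ b ∈ s, (insert a s).filter (· < b) = s.filter (· < b) := by
      intro b hb
      ext x
      simp only [Finset.mem_filter, Finset.mem_insert]
      constructor
      · rintro ⟨h | h, hlt⟩
        · exfalso; have := ha b hb; omega
        · exact ⟨h, hlt⟩
      · rintro ⟨h, hlt⟩; exact ⟨Or.inr h, hlt⟩
    have h2' : ∑ b ∈ s, ((insert a s).filter (· < b)).card
        = ∑ b ∈ s, (s.filter (· < b)).card :=
      Finset.sum_congr rfl fun b hb => by rw [h2 b hb]
    rw [h1, h2', ih, Finset.card_insert_of_notMem (fun h => has h)]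
    rw [Nat.choose_succ_succ]
    simp [Nat.choose_one_right, Nat.add_comm]

lemma NP_one (S : Finset ℕ) :
    NP 1 S + (S.card).choose 2 = ∑ b ∈ S, b := by
  rw [← sum_filter_lt S, NP, ← Finset.sum_add_distrib]
  refine Finset.sum_congr rfl fun b hb => ?_
  have h1 : (Finset.range b).filter (fun x => x ∉ S ∧ 1 ∣ b - x)
      = (Finset.range b).filter (fun x => ¬ x ∈ S) := by
    refine Finset.filter_congr fun x _ => by simp
  have h2 : S.filter (· < b) = (Finset.range b).filter (fun x => x ∈ S) := by
    ext x; simp only [Finset.mem_filter, Finset.mem_range]; tauto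
  rw [h1, h2]
  have h3 := Finset.card_filter_add_card_filter_not (s := Finset.range b)
    (p := fun x => x ∈ S)
  rw [Finset.card_range] at h3
  omega

lemma triangle_le_sum (U : Finset ℕ) :
    ∑ i ∈ Finset.range U.card, i ≤ ∑ u ∈ U, u := by
  induction U using Finset.induction_on_max with
  | empty => simp
  | insert a s ha ih =>
    have has : a ∉ s := fun h => lt_irrefl a (ha a h)
    have hsub : s ⊆ Finset.range a := fun x hx => Finset.mem_range.2 (ha x hx)
    have hcard : s.card ≤ a := by
      calc s.card ≤ (Finset.range a).card := Finset.card_le_card hsub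
        _ = a := Finset.card_range a
    rw [Finset.card_insert_of_notMem has, Finset.sum_insert has, Finset.sum_range_succ]
    omega

lemma sum_range_id_eq_choose (m : ℕ) : ∑ j ∈ Finset.range m, j = m.choose 2 := by
  have h1 := Finset.sum_range_id_mul_two m
  have h2 := Nat.choose_two_right m
  omega

lemma choose_le_runner_sum {t : ℕ} (ht : 0 < t) (S : Finset ℕ) :
    (S.card).choose 2 ≤ ∑ c ∈ Finset.range t,
      (c * (RN t c S).card + t * ((RN t c S).card.choose 2)) := by
  set U : Finset ℕ := (Finset.range t).biUnion
    (fun c => (Finset.range (RN t c S).card).image (fun j => t * j + c)) with hU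
  have hinj : ∀ c, Set.InjOn (fun j => t * j + c) ↑(Finset.range (RN t c S).card) := by
    intro c a _ b _ hab
    simp only at hab
    exact Nat.eq_of_mul_eq_mul_left ht (by omega)
  have hdisj : ∀ c1 ∈ Finset.range t, ∀ c2 ∈ Finset.range t, c1 ≠ c2 →
      Disjoint ((Finset.range (RN t c1 S).card).image (fun j => t * j + c1))
        ((Finset.range (RN t c2 S).card).image (fun j => t * j + c2)) := by
    intro c1 hc1 c2 hc2 hne
    rw [Finset.disjoint_left]
    intro x hx1 hx2
    simp only [Finset.mem_image, Finset.mem_range] at hx1 hx2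
    obtain ⟨j1, _, h1⟩ := hx1
    obtain ⟨j2, _, h2⟩ := hx2
    rw [Finset.mem_range] at hc1 hc2
    apply hne
    have e1 : x % t = c1 := by rw [← h1]; simp [Nat.mul_add_mod, Nat.mod_eq_of_lt hc1]
    have e2 : x % t = c2 := by rw [← h2]; simp [Nat.mul_add_mod, Nat.mod_eq_of_lt hc2]
    omega
  have hcardU : U.card = S.card := by
    rw [hU, Finset.card_biUnion hdisj, runner_card ht S]
    refine Finset.sum_congr rfl fun c _ => ?_
    rw [Finset.card_image_of_injOn (hinj c), Finset.card_range]
  have hsumU : ∑ u ∈ U, u = ∑ c ∈ Finset.range t,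
      (c * (RN t c S).card + t * ((RN t c S).card.choose 2)) := by
    rw [hU, Finset.sum_biUnion]
    · refine Finset.sum_congr rfl fun c _ => ?_
      rw [Finset.sum_image (fun a ha b hb hab => hinj c ha hb hab)]
      rw [Finset.sum_add_distrib, ← Finset.mul_sum, Finset.sum_const, Finset.card_range,
        sum_range_id_eq_choose]
      ring
    · intro c1 hc1 c2 hc2 hne
      exact hdisj c1 hc1 c2 hc2 hne
  calc (S.card).choose 2 = ∑ i ∈ Finset.range U.card, i := by
        rw [hcardU, sum_range_id_eq_choose]
    _ ≤ ∑ u ∈ U, u := triangle_le_sum U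
    _ = _ := hsumU

lemma key_ineq {t : ℕ} (ht : 0 < t) (S : Finset ℕ) :
    t * NP t S ≤ NP 1 S := by
  have hdecomp : NP t S = ∑ c ∈ Finset.range t, NP 1 (RN t c S) := by
    have := runner_NP ht 1 S
    rwa [Nat.mul_one] at this
  -- ∑ over S of b equals runner-wise sum
  have hsumS : ∑ b ∈ S, b = ∑ c ∈ Finset.range t, ∑ b' ∈ RN t c S, (t * b' + c) := by
    rw [← Finset.sum_fiberwise_of_maps_to (g := fun b => b % t) (t := Finset.range t)
      (fun x _ => Finset.mem_range.2 (Nat.mod_lt _ ht)) (f := fun b => b)]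
    refine Finset.sum_congr rfl fun c hc => ?_
    rw [show RN t c S = (S.filter (fun b => b % t = c)).image (· / t) from rfl,
      Finset.sum_image (fun a ha b hb hab => injOn_div_runner ht S ha hb hab)]
    refine Finset.sum_congr rfl fun b hb => ?_
    simp only [Finset.mem_filter] at hb
    have := Nat.div_add_mod b t
    omega
  have hNP1 := NP_one S
  have hNP1c : ∀ c, NP 1 (RN t c S) + ((RN t c S).card).choose 2 = ∑ b' ∈ RN t c S, b' :=
    fun c => NP_one (RN t c S)
  have hC := choose_le_runner_sum ht S
  -- expand: t * NP t S + ∑_c (c * n_c + t * choose n_c 2) = ∑ b ∈ S, b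
  have hexp : t * NP t S + ∑ c ∈ Finset.range t,
      (c * (RN t c S).card + t * ((RN t c S).card.choose 2)) = ∑ b ∈ S, b := by
    rw [hdecomp, Finset.mul_sum, ← Finset.sum_add_distrib, hsumS]
    refine Finset.sum_congr rfl fun c _ => ?_
    have h := hNP1c c
    rw [Finset.sum_add_distrib, ← Finset.mul_sum, Finset.sum_const, ← h]
    ring
  omega

lemma main_pairs {r t : ℕ} (hr : 0 < r) (ht : 0 < t) (S : Finset ℕ) :
    t * NP (r * t) S ≤ NP r S := by
  have h1 : NP (r * t) S = ∑ c ∈ Finset.range r, NP t (RN r c S) := runner_NP hr t S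
  have h2 : NP r S = ∑ c ∈ Finset.range r, NP 1 (RN r c S) := by
    have := runner_NP hr 1 S
    rwa [Nat.mul_one] at this
  rw [h1, h2, Finset.mul_sum]
  exact Finset.sum_le_sum fun c _ => key_ineq ht (RN r c S)

/-! ### β-sets of Young diagrams -/

namespace HookAux

variable (lam : YoungDiagram)

/-- number of rows -/
def nr : ℕ := lam.colLen 0

/-- β-numbers (first-column hook lengths, using `nr lam` rows) -/
def bt (i : ℕ) : ℕ := lam.rowLen i + (nr lam - 1 - i)

/-- the complement positions, indexed by columns -/
def xs (j : ℕ) : ℕ := j + (nr lam - lam.colLen j)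

/-- the β-set -/
def BS : Finset ℕ := (Finset.range (nr lam)).image (bt lam)

lemma colLen_le (j : ℕ) : lam.colLen j ≤ nr lam :=
  lam.colLen_anti 0 j (Nat.zero_le j)

lemma rowLen_pos {i : ℕ} (hi : i < nr lam) : 0 < lam.rowLen i := by
  have : (i, 0) ∈ lam := YoungDiagram.mem_iff_lt_colLen.2 hi
  have := YoungDiagram.mem_iff_lt_rowLen.1 this
  omega

lemma bt_lt_bt {i i' : ℕ} (h : i < i') (h' : i' < nr lam) : bt lam i' < bt lam i := by
  have h1 : lam.rowLen i' ≤ lam.rowLen i := lam.rowLen_anti i i' (le_of_lt h)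
  have h2 : 0 < lam.rowLen i' := rowLen_pos lam h'
  unfold bt
  omega

lemma bt_injOn : Set.InjOn (bt lam) ↑(Finset.range (nr lam)) := by
  intro a ha b hb hab
  simp only [Finset.coe_range, Set.mem_Iio] at ha hb
  rcases Nat.lt_trichotomy a b with h | h | h
  · exact absurd hab (Nat.ne_of_gt (bt_lt_bt lam h hb))
  · exact h
  · exact absurd hab (Nat.ne_of_lt (bt_lt_bt lam h ha))

lemma mem_BS {b : ℕ} : b ∈ BS lam ↔ ∃ i < nr lam, bt lam i = b := by
  simp [BS, Finset.mem_image]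

lemma xs_not_mem (j : ℕ) : xs lam j ∉ BS lam := by
  rw [mem_BS]
  rintro ⟨k, hk, he⟩
  have hC : lam.colLen j ≤ nr lam := colLen_le lam j
  by_cases hmem : (k, j) ∈ lam
  · have h1 : j < lam.rowLen k := YoungDiagram.mem_iff_lt_rowLen.1 hmem
    have h2 : k < lam.colLen j := YoungDiagram.mem_iff_lt_colLen.1 hmem
    unfold bt xs at he
    omega
  · have h1 : lam.rowLen k ≤ j := by
      by_contra h
      exact hmem (YoungDiagram.mem_iff_lt_rowLen.2 (by omega))
    have h2 : lam.colLen j ≤ k := by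
      by_contra h
      exact hmem (YoungDiagram.mem_iff_lt_colLen.2 (by omega))
    unfold bt xs at he
    omega

lemma xs_lt_xs {j j' : ℕ} (h : j < j') : xs lam j < xs lam j' := by
  have h1 : lam.colLen j' ≤ lam.colLen j := lam.colLen_anti j j' (le_of_lt h)
  have h2 : lam.colLen j ≤ nr lam := colLen_le lam j
  unfold xs
  omega

lemma cell_facts {i j : ℕ} (h : (i, j) ∈ lam) :
    i < nr lam ∧ j < lam.rowLen i ∧ i < lam.colLen j := by
  have h1 : j < lam.rowLen i := YoungDiagram.mem_iff_lt_rowLen.1 h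
  have h2 : i < lam.colLen j := YoungDiagram.mem_iff_lt_colLen.1 h
  exact ⟨lt_of_lt_of_le h2 (colLen_le lam j), h1, h2⟩

lemma xs_lt_bt {i j : ℕ} (h : (i, j) ∈ lam) :
    xs lam j < bt lam i ∧ bt lam i - xs lam j = hookLength lam i j := by
  obtain ⟨hn, hr, hc⟩ := cell_facts lam h
  have hC : lam.colLen j ≤ nr lam := colLen_le lam j
  unfold bt xs hookLength
  omega

lemma bt_mem_BS {i : ℕ} (hi : i < nr lam) : bt lam i ∈ BS lam :=
  (mem_BS lam).2 ⟨i, hi, rfl⟩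

lemma card_BS : (BS lam).card = nr lam := by
  rw [BS, Finset.card_image_of_injOn (bt_injOn lam), Finset.card_range]

lemma count_lt_bt {i : ℕ} (hi : i < nr lam) :
    ((BS lam).filter (· < bt lam i)).card = nr lam - 1 - i := by
  have hset : (BS lam).filter (· < bt lam i) = (Finset.Ioo i (nr lam)).image (bt lam) := by
    ext b
    simp only [Finset.mem_filter, Finset.mem_image, Finset.mem_Ioo, mem_BS]
    constructor
    · rintro ⟨⟨k, hk, rfl⟩, hlt⟩
      refine ⟨k, ⟨?_, hk⟩, rfl⟩
      by_contra h
      push_neg at h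
      rcases Nat.lt_or_ge i k with h' | h'
      · exact absurd h' (by omega)
      · rcases Nat.eq_or_lt_of_le h' with rfl | h''
        · omega
        · exact absurd hlt (not_lt.2 (le_of_lt (bt_lt_bt lam h'' hi)))
    · rintro ⟨k, ⟨hik, hk⟩, rfl⟩
      exact ⟨⟨k, hk, rfl⟩, bt_lt_bt lam hik hk⟩
  rw [hset, Finset.card_image_of_injOn ?_, Nat.card_Ioo]
  · omega
  · intro a ha b hb hab
    simp only [Finset.coe_Ioo, Set.mem_Ioo] at ha hb
    exact bt_injOn lam (by simp [ha.2]) (by simp [hb.2]) hab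

lemma cells_eq_biUnion : lam.cells = (Finset.range (nr lam)).biUnion lam.row := by
  ext c
  simp only [Finset.mem_biUnion, Finset.mem_range, YoungDiagram.mem_row_iff,
    YoungDiagram.mem_cells]
  constructor
  · intro hc
    obtain ⟨i, j⟩ := c
    exact ⟨i, (cell_facts lam hc).1, hc, rfl⟩
  · rintro ⟨i, _, hc, _⟩
    exact hc

lemma card_cells : lam.cells.card = ∑ i ∈ Finset.range (nr lam), lam.rowLen i := by
  rw [cells_eq_biUnion lam, Finset.card_biUnion]
  · exact Finset.sum_congr rfl fun i _ => (lam.rowLen_eq_card (i := i)).symm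
  · intro i _ j _ hij
    rw [Function.onFun, Finset.disjoint_left]
    intro c hc1 hc2
    rw [YoungDiagram.mem_row_iff] at hc1 hc2
    exact hij (hc1.2 ▸ hc2.2)

/-- The full target of the β-set bijection: pairs `⟨b, x⟩`, `b ∈ BS`, `x < b`, `x ∉ BS`. -/
def TT : Finset ((_ : ℕ) × ℕ) :=
  (BS lam).sigma (fun b => (Finset.range b).filter (· ∉ BS lam))

/-- The bijection from cells to pairs. -/
def GG (c : ℕ × ℕ) : (_ : ℕ) × ℕ := ⟨bt lam c.1, xs lam c.2⟩

lemma GG_maps {c : ℕ × ℕ} (hc : c ∈ lam.cells) : GG lam c ∈ TT lam := by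
  obtain ⟨i, j⟩ := c
  rw [YoungDiagram.mem_cells] at hc
  obtain ⟨hn, _, _⟩ := cell_facts lam hc
  obtain ⟨hlt, _⟩ := xs_lt_bt lam hc
  rw [TT, Finset.mem_sigma]
  exact ⟨bt_mem_BS lam hn, by
    simp only [GG, Finset.mem_filter, Finset.mem_range]
    exact ⟨hlt, xs_not_mem lam j⟩⟩

lemma GG_inj {c c' : ℕ × ℕ} (hc : c ∈ lam.cells) (hc' : c' ∈ lam.cells)
    (h : GG lam c = GG lam c') : c = c' := by
  obtain ⟨i, j⟩ := c
  obtain ⟨i', j'⟩ := c'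
  rw [YoungDiagram.mem_cells] at hc hc'
  have hn := (cell_facts lam hc).1
  have hn' := (cell_facts lam hc').1
  simp only [GG, Sigma.mk.inj_iff, heq_eq_eq] at h
  obtain ⟨h1, h2⟩ := h
  have hi : i = i' := bt_injOn lam (by simp [hn]) (by simp [hn']) h1
  have hj : j = j' := by
    rcases Nat.lt_trichotomy j j' with h | h | h
    · exact absurd h2 (Nat.ne_of_lt (xs_lt_xs lam h))
    · exact h
    · exact absurd h2 (Nat.ne_of_gt (xs_lt_xs lam h))
  simp [hi, hj]

lemma card_TT : (TT lam).card = lam.cells.card := by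
  rw [TT, Finset.card_sigma, card_cells]
  have himg : ∑ b ∈ (Finset.range (nr lam)).image (bt lam),
      ((Finset.range b).filter (· ∉ BS lam)).card
      = ∑ i ∈ Finset.range (nr lam), ((Finset.range (bt lam i)).filter (· ∉ BS lam)).card :=
    Finset.sum_image (fun a ha b hb hab => bt_injOn lam ha hb hab)
  calc ∑ b ∈ BS lam, ((Finset.range b).filter (· ∉ BS lam)).card
      = ∑ i ∈ Finset.range (nr lam), ((Finset.range (bt lam i)).filter (· ∉ BS lam)).card :=
        himg
    _ = ∑ i ∈ Finset.range (nr lam), lam.rowLen i := by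
        refine Finset.sum_congr rfl fun i hi => ?_
        rw [Finset.mem_range] at hi
        have h2 : (Finset.range (bt lam i)).filter (fun x => x ∈ BS lam)
            = (BS lam).filter (· < bt lam i) := by
          ext x; simp only [Finset.mem_filter, Finset.mem_range]; tauto
        have h3 := Finset.card_filter_add_card_filter_not
          (s := Finset.range (bt lam i)) (p := fun x => x ∈ BS lam)
        rw [Finset.card_range, h2, count_lt_bt lam hi] at h3
        have h4 : nr lam - 1 - i ≤ bt lam i := by unfold bt; omega
        have h5 : bt lam i + (lam.rowLen i + (nr lam - 1 - i)) =
            lam.rowLen i + (lam.rowLen i + 2 * (nr lam - 1 - i)) := by unfold bt; omega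
        omega

lemma GG_surj : ∀ p ∈ TT lam, ∃ c, ∃ _ : c ∈ lam.cells, p = GG lam c :=
  Finset.surj_on_of_inj_on_of_card_le (fun c _ => GG lam c)
    (fun c hc => GG_maps lam hc)
    (fun c c' hc hc' h => GG_inj lam hc hc' h)
    (le_of_eq (card_TT lam))

lemma master (P : ℕ → Prop) [DecidablePred P] :
    (lam.cells.filter (fun c => P (hookLength lam c.1 c.2))).card
      = ∑ b ∈ BS lam, ((Finset.range b).filter (fun x => x ∉ BS lam ∧ P (b - x))).card := by
  rw [← Finset.card_sigma]
  refine Finset.card_bij (fun c _ => GG lam c) ?_ ?_ ?_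
  · -- maps to
    intro c hc
    rw [Finset.mem_filter] at hc
    obtain ⟨hcell, hP⟩ := hc
    obtain ⟨i, j⟩ := c
    rw [YoungDiagram.mem_cells] at hcell
    obtain ⟨hn, _, _⟩ := cell_facts lam hcell
    obtain ⟨hlt, hd⟩ := xs_lt_bt lam hcell
    rw [Finset.mem_sigma]
    constructor
    · exact bt_mem_BS lam hn
    · simp only [GG, Finset.mem_filter, Finset.mem_range]
      exact Finset.mem_filter.2 ⟨Finset.mem_range.2 hlt, xs_not_mem lam j, by show P (bt lam i - xs lam j); rwa [hd]⟩
  · -- injective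
    intro c hc c' hc' h
    rw [Finset.mem_filter] at hc hc'
    exact GG_inj lam hc.1 hc'.1 h
  · -- surjective
    rintro ⟨b, x⟩ hp
    simp only [Finset.mem_sigma, Finset.mem_filter, Finset.mem_range] at hp
    obtain ⟨hb, hxb, hxBS, hP⟩ := hp
    have hpT : (⟨b, x⟩ : (_ : ℕ) × ℕ) ∈ TT lam := by
      rw [TT, Finset.mem_sigma, Finset.mem_filter]
      exact ⟨hb, Finset.mem_range.2 hxb, hxBS⟩
    obtain ⟨c, hc, hceq⟩ := GG_surj lam ⟨b, x⟩ hpT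
    refine ⟨c, Finset.mem_filter.2 ⟨hc, ?_⟩, hceq.symm⟩
    obtain ⟨i, j⟩ := c
    rw [YoungDiagram.mem_cells] at hc
    have hd := (xs_lt_bt lam hc).2
    simp only [GG, Sigma.mk.inj_iff, heq_eq_eq] at hceq
    obtain ⟨rfl, rfl⟩ := hceq
    rwa [hd] at hP

lemma count_eq_NP (q : ℕ) :
    (lam.cells.filter (fun c => q ∣ hookLength lam c.1 c.2)).card = NP q (BS lam) := by
  rw [master lam (fun h => q ∣ h), NP]

lemma hook_pos {i j : ℕ} (h : (i, j) ∈ lam) : 0 < hookLength lam i j := by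
  obtain ⟨_, h1, h2⟩ := cell_facts lam h
  unfold hookLength
  omega

lemma hook_le {i j : ℕ} (h : (i, j) ∈ lam) :
    hookLength lam i j ≤ lam.rowLen 0 + nr lam := by
  obtain ⟨_, h1, h2⟩ := cell_facts lam h
  have h3 : lam.rowLen i ≤ lam.rowLen 0 := lam.rowLen_anti 0 i (Nat.zero_le i)
  have h4 : lam.colLen j ≤ nr lam := colLen_le lam j
  unfold hookLength
  omega

lemma hookProd_pos {q : ℕ} (hq : 0 < q) : 0 < hookProd q lam := by
  rw [hookProd]
  refine Finset.prod_pos fun c hc => ?_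
  rw [Finset.mem_filter] at hc
  obtain ⟨hcell, hdvd⟩ := hc
  obtain ⟨i, j⟩ := c
  rw [YoungDiagram.mem_cells] at hcell
  exact Nat.div_pos (Nat.le_of_dvd (hook_pos lam hcell) hdvd) hq

lemma vcount {p : ℕ} (hp : p.Prime) {q : ℕ} (hq : 0 < q) :
    (hookProd q lam).factorization p
      = ∑ k ∈ Finset.Icc 1 (lam.rowLen 0 + nr lam),
          (lam.cells.filter (fun c => q * p ^ k ∣ hookLength lam c.1 c.2)).card := by
  set M := lam.rowLen 0 + nr lam with hM
  have hne : ∀ c ∈ lam.cells.filter (fun c => q ∣ hookLength lam c.1 c.2),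
      hookLength lam c.1 c.2 / q ≠ 0 := by
    intro c hc
    obtain ⟨i, j⟩ := c
    rw [Finset.mem_filter] at hc
    simp only [YoungDiagram.mem_cells] at hc
    dsimp only
    have := Nat.div_pos (Nat.le_of_dvd (hook_pos lam hc.1) hc.2) hq
    omega
  rw [hookProd, Nat.factorization_prod hne]
  rw [Finsupp.finset_sum_apply]
  have step : ∀ c ∈ lam.cells.filter (fun c => q ∣ hookLength lam c.1 c.2),
      (hookLength lam c.1 c.2 / q).factorization p
        = ((Finset.Icc 1 M).filter (fun k => q * p ^ k ∣ hookLength lam c.1 c.2)).card := by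
    intro c hc
    obtain ⟨i, j⟩ := c
    rw [Finset.mem_filter] at hc
    simp only [YoungDiagram.mem_cells] at hc
    obtain ⟨hcell, hdvd⟩ := hc
    dsimp only at hdvd ⊢
    obtain ⟨m, hqm⟩ := hdvd
    have hm0 : m ≠ 0 := by
      rintro rfl
      rw [Nat.mul_zero] at hqm
      have := hook_pos lam hcell
      omega
    have hdivq : hookLength lam i j / q = m := by
      rw [hqm, Nat.mul_div_cancel_left _ hq]
    have hmM : m ≤ M := by
      have h1 := hook_le lam hcell
      have h2 : m ≤ q * m := Nat.le_mul_of_pos_left m hq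
      omega
    have hvM : m.factorization p ≤ M :=
      le_trans (le_of_lt (Nat.factorization_lt p hm0)) hmM
    have hiff : ∀ k, (q * p ^ k ∣ hookLength lam i j ↔ k ≤ m.factorization p) := by
      intro k
      rw [hqm, mul_dvd_mul_iff_left (by omega : q ≠ 0),
        Nat.Prime.pow_dvd_iff_le_factorization hp hm0]
    have hfe : (Finset.Icc 1 M).filter (fun k => q * p ^ k ∣ hookLength lam i j)
        = Finset.Icc 1 (m.factorization p) := by
      ext k
      simp only [Finset.mem_filter, Finset.mem_Icc, hiff k]
      omega
    rw [hdivq, hfe, Nat.card_Icc]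
    omega
  set F := lam.cells.filter (fun c => q ∣ hookLength lam c.1 c.2) with hF
  calc ∑ c ∈ F, (hookLength lam c.1 c.2 / q).factorization p
      = ∑ c ∈ F, ((Finset.Icc 1 M).filter
          (fun k => q * p ^ k ∣ hookLength lam c.1 c.2)).card :=
        Finset.sum_congr rfl step
    _ = ∑ c ∈ F, ∑ k ∈ Finset.Icc 1 M,
          if q * p ^ k ∣ hookLength lam c.1 c.2 then 1 else 0 := by
        refine Finset.sum_congr rfl fun c _ => ?_
        rw [Finset.card_filter]
    _ = ∑ k ∈ Finset.Icc 1 M, ∑ c ∈ F,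
          if q * p ^ k ∣ hookLength lam c.1 c.2 then 1 else 0 := Finset.sum_comm
    _ = ∑ k ∈ Finset.Icc 1 M,
          (F.filter (fun c => q * p ^ k ∣ hookLength lam c.1 c.2)).card := by
        refine Finset.sum_congr rfl fun k _ => (Finset.card_filter _ _).symm
    _ = ∑ k ∈ Finset.Icc 1 M,
          (lam.cells.filter (fun c => q * p ^ k ∣ hookLength lam c.1 c.2)).card := by
        refine Finset.sum_congr rfl fun k _ => ?_
        rw [hF, Finset.filter_filter]
        refine congrArg Finset.card (Finset.filter_congr fun c _ => ?_)
        constructor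
        · exact fun hand => hand.2
        · exact fun hd => ⟨dvd_trans (dvd_mul_right q (p ^ k)) hd, hd⟩

end HookAux

theorem stmt_1 (s t : ℕ) (hs : 0 < s) (ht : 0 < t) (lam : YoungDiagram) :
    (hookProd (s * t) lam) ^ t ∣ hookProd s lam := by
  classical
  have hX : hookProd (s * t) lam ≠ 0 := (HookAux.hookProd_pos lam (Nat.mul_pos hs ht)).ne'
  have hY : hookProd s lam ≠ 0 := (HookAux.hookProd_pos lam hs).ne'
  rw [← Nat.factorization_le_iff_dvd (pow_ne_zero t hX) hY, Finsupp.le_def]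
  intro p
  by_cases hp : p.Prime
  · rw [Nat.factorization_pow]
    simp only [Finsupp.smul_apply, smul_eq_mul]
    rw [HookAux.vcount lam hp (Nat.mul_pos hs ht), HookAux.vcount lam hp hs,
      Finset.mul_sum]
    refine Finset.sum_le_sum fun k _ => ?_
    have hmul : s * t * p ^ k = (s * p ^ k) * t := by ring
    rw [hmul, HookAux.count_eq_NP, HookAux.count_eq_NP]
    exact main_pairs (Nat.mul_pos hs (Nat.pow_pos hp.pos)) ht (HookAux.BS lam)
  · rw [Nat.factorization_eq_zero_of_not_prime _ hp]
    exact Nat.zero_le _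
end

section
/- Let s and t be positive integers. Then for every partition λ, the number of boxes of λ whose hook length is divisible by s is at least t times the number of boxes whose hook length is divisible by st; that is, h_s(λ) − t·h_{st}(λ) ≥ 0. -/
open Finset


def Gg (d : ℕ) (B : Finset ℕ) : ℕ :=
  ∑ b ∈ B, ((Finset.range b).filter fun c => c ∉ B ∧ c % d = b % d).card

def Pp (d : ℕ) (B : Finset ℕ) : ℕ :=
  ((B ×ˢ B).filter fun p => p.1 < p.2 ∧ p.1 % d = p.2 % d).card

lemma count_mod (d b : ℕ) (hd : 0 < d) :
    ((Finset.range b).filter fun c => c % d = b % d).card = b / d := by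
  rw [← Nat.Ioc_filter_dvd_card_eq_div b d]
  apply Finset.card_nbij' (fun c => b - c) (fun x => b - x)
  · intro c hc
    simp only [Finset.mem_coe, mem_filter, mem_range] at hc
    simp only [Finset.mem_coe, mem_filter, mem_Ioc]
    refine ⟨⟨by omega, by omega⟩, ?_⟩
    exact (Nat.modEq_iff_dvd' hc.1.le).mp hc.2
  · intro x hx
    simp only [Finset.mem_coe, mem_filter, mem_Ioc] at hx
    simp only [Finset.mem_coe, mem_filter, mem_range]
    have h1 : b - x < b := by omega
    refine ⟨h1, ?_⟩
    have : b - (b - x) = x := by omega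
    exact (Nat.modEq_iff_dvd' (by omega)).mpr (by rw [this]; exact hx.2)
  · intro c hc; simp only [Finset.mem_coe, mem_filter, mem_range] at hc ⊢; omega
  · intro x hx; simp only [Finset.mem_coe, mem_filter, mem_Ioc] at hx ⊢; omega

lemma Gg_add_Pp (d : ℕ) (hd : 0 < d) (B : Finset ℕ) :
    Gg d B + Pp d B = ∑ b ∈ B, b / d := by
  have key : ∀ b ∈ B,
      ((Finset.range b).filter fun c => c ∉ B ∧ c % d = b % d).card
      + ((Finset.range b).filter fun c => c ∈ B ∧ c % d = b % d).card = b / d := by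
    intro b _
    rw [← count_mod d b hd, Nat.add_comm]
    rw [← Finset.card_filter_add_card_filter_not
      (s := (Finset.range b).filter fun c => c % d = b % d) (p := fun c => c ∈ B)]
    rw [Finset.filter_filter, Finset.filter_filter]
    congr 1
    · congr 1; ext c; simp only [mem_filter]; tauto
    · congr 1; ext c; simp only [mem_filter]; tauto
  have hP : Pp d B = ∑ b ∈ B, ((Finset.range b).filter fun c => c ∈ B ∧ c % d = b % d).card := by
    unfold Pp
    rw [Finset.card_eq_sum_card_fiberwise (f := Prod.snd) (t := B)
      (fun p hp => by simp only [Finset.mem_coe, mem_filter, mem_product] at hp; exact hp.1.2)]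
    apply Finset.sum_congr rfl
    intro b hb
    apply Finset.card_nbij' (fun p => p.1) (fun c => (c, b))
    · intro p hp; simp only [Finset.mem_coe, mem_filter, mem_product, mem_range] at hp ⊢
      refine ⟨by omega, hp.1.1.1, by rw [hp.2] at hp; exact hp.1.2.2⟩
    · intro c hc; simp only [Finset.mem_coe, mem_filter, mem_product, mem_range] at hc ⊢
      exact ⟨⟨⟨hc.2.1, hb⟩, hc.1, hc.2.2⟩, trivial⟩
    · intro p hp; simp only [Finset.mem_coe, mem_filter] at hp; rw [← hp.2]
    · intro c _; rfl
  rw [hP]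
  unfold Gg
  rw [← Finset.sum_add_distrib]
  exact Finset.sum_congr rfl key

def Ss (d : ℕ) (B : Finset ℕ) : ℕ :=
  ((B ×ˢ B).filter fun p => p.1 ≠ p.2 ∧ p.1 % d = p.2 % d).card

lemma two_Pp (d : ℕ) (B : Finset ℕ) : Ss d B = 2 * Pp d B := by
  have hsplit : ((B ×ˢ B).filter fun p => p.1 ≠ p.2 ∧ p.1 % d = p.2 % d)
      = ((B ×ˢ B).filter fun p => p.1 < p.2 ∧ p.1 % d = p.2 % d)
      ∪ ((B ×ˢ B).filter fun p => p.2 < p.1 ∧ p.1 % d = p.2 % d) := by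
    rw [← Finset.filter_or]
    congr 1; ext p
    constructor
    · rintro ⟨h1, h2⟩
      rcases Nat.lt_or_ge p.1 p.2 with h | h
      · exact Or.inl ⟨h, h2⟩
      · exact Or.inr ⟨by omega, h2⟩
    · rintro (⟨h1, h2⟩ | ⟨h1, h2⟩) <;> exact ⟨by omega, h2⟩
  have hdisj : Disjoint ((B ×ˢ B).filter fun p => p.1 < p.2 ∧ p.1 % d = p.2 % d)
      ((B ×ˢ B).filter fun p => p.2 < p.1 ∧ p.1 % d = p.2 % d) := by
    apply Finset.disjoint_filter_filter'
    rw [disjoint_iff_inf_le]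
    rintro p ⟨⟨h1, _⟩, ⟨h2, _⟩⟩
    omega
  have hswap : ((B ×ˢ B).filter fun p => p.2 < p.1 ∧ p.1 % d = p.2 % d).card
      = ((B ×ˢ B).filter fun p => p.1 < p.2 ∧ p.1 % d = p.2 % d).card := by
    apply Finset.card_nbij' Prod.swap Prod.swap <;>
      intro p hp <;> simp only [Finset.mem_coe, mem_filter, mem_product, Prod.fst_swap, Prod.snd_swap,
        Prod.swap_swap] at hp ⊢ <;> tauto
  unfold Ss Pp
  rw [hsplit, Finset.card_union_of_disjoint hdisj, hswap]
  ring

lemma Pp_swap (d r b : ℕ) (B : Finset ℕ) (hd : d ∣ r) (hr : 0 < r) (hb : b ∈ B)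
    (hrb : r ≤ b) (hnb : b - r ∉ B) :
    Pp d (insert (b - r) (B.erase b)) = Pp d B := by
  set B' := insert (b - r) (B.erase b) with hB'
  set σ : ℕ → ℕ := fun x => if x = b then b - r else if x = b - r then b else x with hσ
  have hbne : b - r ≠ b := by omega
  have hmem : ∀ x, x ∈ B ↔ σ x ∈ B' := by
    intro x
    simp only [hσ]
    by_cases h1 : x = b
    · simp [h1, hB', hbne, hb]
    · by_cases h2 : x = b - r
      · simp only [h2, if_neg hbne, if_pos rfl]
        constructor
        · intro h; exact absurd h hnb
        · intro h
          exfalso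
          rcases Finset.mem_insert.mp h with h | h
          · exact hbne h.symm
          · exact (Finset.mem_erase.mp h).1 rfl
      · simp only [if_neg h1, if_neg h2, hB', Finset.mem_insert, Finset.mem_erase]
        constructor
        · intro h; exact Or.inr ⟨h1, h⟩
        · rintro (h | h); · exact absurd h h2
          · exact h.2
  have hmod : ∀ x, σ x % d = x % d := by
    intro x
    simp only [hσ]
    obtain ⟨m, rfl⟩ := hd
    by_cases h1 : x = b
    · subst h1; rw [if_pos rfl]; exact Nat.sub_mul_mod hrb
    · by_cases h2 : x = b - d * m
      · subst h2; rw [if_neg h1, if_pos rfl]; exact (Nat.sub_mul_mod hrb).symm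
      · rw [if_neg h1, if_neg h2]
  have hinv : ∀ x, σ (σ x) = x := by
    intro x
    simp only [hσ]
    by_cases h1 : x = b
    · simp [h1, hbne]
    · by_cases h2 : x = b - r
      · simp [h1, h2, hbne]
      · simp [h1, h2]
  have hmem' : ∀ y, y ∈ B' ↔ σ y ∈ B := by
    intro y
    have := hmem (σ y)
    rw [hinv] at this
    exact this.symm
  have hinj : ∀ x y, σ x = σ y → x = y := by
    intro x y h
    have := congrArg σ h
    rwa [hinv, hinv] at this
  have hSs : Ss d B' = Ss d B := by
    unfold Ss
    apply Finset.card_nbij' (fun p => (σ p.1, σ p.2)) (fun p => (σ p.1, σ p.2))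
    · rintro ⟨x, y⟩ hp
      simp only [Finset.mem_coe, mem_filter, mem_product] at hp ⊢
      obtain ⟨⟨hx, hy⟩, hne, hm⟩ := hp
      exact ⟨⟨(hmem' x).mp hx, (hmem' y).mp hy⟩,
        fun h => hne (hinj _ _ h), by rw [hmod x, hmod y]; exact hm⟩
    · rintro ⟨x, y⟩ hp
      simp only [Finset.mem_coe, mem_filter, mem_product] at hp ⊢
      obtain ⟨⟨hx, hy⟩, hne, hm⟩ := hp
      exact ⟨⟨(hmem x).mp hx, (hmem y).mp hy⟩,
        fun h => hne (hinj _ _ h), by rw [hmod x, hmod y]; exact hm⟩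
    · rintro ⟨x, y⟩ _; simp only [hinv]
    · rintro ⟨x, y⟩ _; simp only [hinv]
  have h1 := two_Pp d B
  have h2 := two_Pp d B'
  omega

lemma hk_Gg_aux (r : ℕ) (hr : 0 < r) (B : Finset ℕ) :
    ∀ b, b ∈ B → ∀ c, c < b → c ∉ B → c % r = b % r →
      ∃ b' ∈ B, r ≤ b' ∧ b' - r ∉ B := by
  intro b
  induction b using Nat.strong_induction_on with
  | _ b IH =>
    intro hb c hcb hcB hmod
    have hdvd : r ∣ b - c := (Nat.modEq_iff_dvd' hcb.le).mp hmod
    have hrc : c + r ≤ b := by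
      have := Nat.le_of_dvd (by omega) hdvd
      omega
    by_cases hbr : b - r ∈ B
    · have hne : c ≠ b - r := fun h => hcB (h ▸ hbr)
      refine IH (b - r) (by omega) hbr c (by omega) hcB ?_
      have h1 : (b - r) % r = b % r := by
        have := Nat.sub_mul_mod (x := b) (k := 1) (n := r) (by omega)
        simpa using this
      rw [h1]; exact hmod
    · exact ⟨b, hb, by omega, hbr⟩

lemma hk_exists_swap (r : ℕ) (hr : 0 < r) (B : Finset ℕ) (h : 0 < Gg r B) :
    ∃ b ∈ B, r ≤ b ∧ b - r ∉ B := by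
  have : ∃ b ∈ B, 0 < ((Finset.range b).filter fun c => c ∉ B ∧ c % r = b % r).card := by
    by_contra hc
    push_neg at hc
    have : Gg r B = 0 := Finset.sum_eq_zero fun b hb => by
      have := hc b hb; omega
    omega
  obtain ⟨b, hb, hpos⟩ := this
  obtain ⟨c, hc⟩ := Finset.card_pos.mp hpos
  simp only [mem_filter, mem_range] at hc
  exact hk_Gg_aux r hr B b hb c hc.1 hc.2.1 hc.2.2

lemma Gg_step (d m r b : ℕ) (hd : 0 < d) (hm : 0 < m) (hr : r = d * m)
    (B : Finset ℕ) (hb : b ∈ B) (hrb : r ≤ b) (hnb : b - r ∉ B) :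
    Gg d B = Gg d (insert (b - r) (B.erase b)) + m := by
  set B' := insert (b - r) (B.erase b) with hB'
  have e1 := Gg_add_Pp d hd B
  have e2 := Gg_add_Pp d hd B'
  have e3 : Pp d B' = Pp d B := Pp_swap d r b B ⟨m, hr⟩ (by rw [hr]; exact Nat.mul_pos hd hm) hb hrb hnb
  have e4 : (∑ x ∈ B, x / d) = (∑ x ∈ B', x / d) + m := by
    have h5 : (∑ x ∈ B', x / d) = (b - r) / d + ∑ x ∈ B.erase b, x / d := by
      rw [hB', Finset.sum_insert (fun h => hnb (Finset.mem_of_mem_erase h))]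
    have h6 : (∑ x ∈ B, x / d) = b / d + ∑ x ∈ B.erase b, x / d :=
      (Finset.add_sum_erase B (fun x => x / d) hb).symm
    have h7 : b / d = (b - r) / d + m := by
      have h8 : b = (b - r) + d * m := by omega
      conv_lhs => rw [h8]
      rw [Nat.add_mul_div_left _ _ hd]
    omega
  omega

lemma hk_abstract (s t : ℕ) (hs : 0 < s) (ht : 0 < t) (B : Finset ℕ) :
    t * Gg (s * t) B ≤ Gg s B := by
  suffices H : ∀ N B, (∑ b ∈ B, b) = N → t * Gg (s*t) B ≤ Gg s B from H _ B rfl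
  intro N
  induction N using Nat.strong_induction_on with
  | _ N IH =>
    intro B hBN
    by_cases h0 : Gg (s*t) B = 0
    · simp [h0]
    · obtain ⟨b, hb, hrb, hnb⟩ := hk_exists_swap (s*t) (by positivity) B (Nat.pos_of_ne_zero h0)
      set B' := insert (b - s*t) (B.erase b) with hB'
      have hstep1 : Gg (s*t) B = Gg (s*t) B' + 1 :=
        Gg_step (s*t) 1 (s*t) b (by positivity) one_pos (by ring) B hb hrb hnb
      have hstep2 : Gg s B = Gg s B' + t :=
        Gg_step s t (s*t) b hs ht rfl B hb hrb hnb
      have hsum : (∑ x ∈ B', x) + s*t = ∑ x ∈ B, x := by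
        have h5 : (∑ x ∈ B', x) = (b - s*t) + ∑ x ∈ B.erase b, x := by
          rw [hB', Finset.sum_insert (fun h => hnb (Finset.mem_of_mem_erase h))]
        have h6 : (∑ x ∈ B, x) = b + ∑ x ∈ B.erase b, x :=
          (Finset.add_sum_erase B (fun x => x) hb).symm
        omega
      have hst : 0 < s * t := by positivity
      have hIH := IH (∑ x ∈ B', x) (by omega) B' rfl
      calc t * Gg (s*t) B = t * Gg (s*t) B' + t := by rw [hstep1]; ring
        _ ≤ Gg s B' + t := by omega
        _ = Gg s B := hstep2.symm

def bset (μ : YoungDiagram) : Finset ℕ :=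
  (Finset.range (μ.colLen 0)).image (fun i => μ.rowLen i + (μ.colLen 0 - 1 - i))

section bridge
variable (μ : YoungDiagram)

-- abbreviations
local notation "n" => μ.colLen 0
local notation "L" => μ.rowLen
local notation "C" => μ.colLen

def betaF (i : ℕ) : ℕ := μ.rowLen i + (μ.colLen 0 - 1 - i)
def phiF (j : ℕ) : ℕ := j + (μ.colLen 0 - μ.colLen j)

lemma colLen_le (j : ℕ) : C j ≤ n := μ.colLen_anti 0 j (Nat.zero_le j)

lemma mem_iff (i j : ℕ) : j < L i ↔ i < C j := by
  rw [← YoungDiagram.mem_iff_lt_rowLen, ← YoungDiagram.mem_iff_lt_colLen]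

lemma beta_strict {i i' : ℕ} (h : i < i') (h' : i' < n) : betaF μ i' < betaF μ i := by
  have hL : L i' ≤ L i := μ.rowLen_anti i i' h.le
  unfold betaF
  omega

lemma beta_inj : ∀ x ∈ Finset.range n, ∀ y ∈ Finset.range n,
    betaF μ x = betaF μ y → x = y := by
  intro x hx y hy hxy
  simp only [mem_range] at hx hy
  rcases Nat.lt_trichotomy x y with h | h | h
  · exact absurd hxy (beta_strict μ h hy).ne'
  · exact h
  · exact absurd hxy (beta_strict μ h hx).ne

lemma phi_mono {j j' : ℕ} (h : j < j') : phiF μ j < phiF μ j' := by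
  have hC : C j' ≤ C j := μ.colLen_anti j j' h.le
  have h0 := colLen_le μ j
  unfold phiF
  omega

lemma phi_mono' {j j' : ℕ} (h : j ≤ j') : phiF μ j ≤ phiF μ j' := by
  rcases Nat.eq_or_lt_of_le h with rfl | h
  · exact le_refl _
  · exact (phi_mono μ h).le

lemma phi_ge (j : ℕ) : j ≤ phiF μ j := by unfold phiF; omega

lemma phi_not_mem (j : ℕ) : phiF μ j ∉ bset μ := by
  intro hmem
  simp only [bset, mem_image, mem_range] at hmem
  obtain ⟨k, hk, heq⟩ := hmem
  have hCj := colLen_le μ j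
  by_cases hkC : k < C j
  · have hjL : j < L k := (mem_iff μ k j).mpr hkC
    unfold phiF at heq
    omega
  · have hLk : L k ≤ j := by
      by_contra h
      exact hkC ((mem_iff μ k j).mp (by omega))
    unfold phiF at heq
    omega

lemma hook_eq {i j : ℕ} (hi : i < n) (hj : j < L i) :
    phiF μ j + hookLength μ i j = betaF μ i ∧ phiF μ j < betaF μ i := by
  have hiC : i < C j := (mem_iff μ i j).mp hj
  have hCj := colLen_le μ j
  unfold phiF betaF hookLength
  omega

lemma phi_surj {i c : ℕ} (hi : i < n) (hc : c < betaF μ i) (hcB : c ∉ bset μ) :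
    ∃ j < L i, phiF μ j = c := by
  set P : ℕ → Prop := fun j => phiF μ j ≤ c with hP
  have hP0 : P 0 := by
    simp only [hP, phiF]
    omega
  set j := Nat.findGreatest P c with hj
  have hle : P j := Nat.findGreatest_spec (Nat.zero_le c) hP0
  have hlt : c < phiF μ (j + 1) := by
    by_cases hcase : j + 1 ≤ c
    · have := Nat.findGreatest_is_greatest (lt_add_one j) hcase
      simp only [hP, not_le] at this
      exact this
    · have hjc : j ≥ c := by omega
      have := phi_ge μ (j + 1)
      omega
  have hphiLi : betaF μ i < phiF μ (L i) := by
    have hCL : C (L i) ≤ i := by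
      by_contra h
      have : L i < L i := (mem_iff μ i (L i)).mpr (by omega)
      omega
    have := colLen_le μ (L i)
    unfold phiF betaF
    omega
  rcases Nat.eq_or_lt_of_le hle with heq | hlt2
  · refine ⟨j, ?_, heq⟩
    by_contra h
    have : phiF μ (L i) ≤ phiF μ j := phi_mono' μ (by omega)
    omega
  · exfalso
    apply hcB
    have hCj := colLen_le μ j
    have hCj1 := colLen_le μ (j + 1)
    have hcjn : c ≤ j + n := by
      unfold phiF at hlt
      omega
    set k := j + n - c with hk
    have hkCj : k < C j := by
      unfold phiF at hlt2
      omega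
    have hkCj1 : C (j + 1) ≤ k := by
      unfold phiF at hlt
      omega
    have hLk1 : j < L k := (mem_iff μ k j).mpr hkCj
    have hLk2 : L k ≤ j + 1 := by
      by_contra h
      exact absurd ((mem_iff μ k (j+1)).mp (by omega)) (by omega)
    have hkn : k < n := by
      have := colLen_le μ j
      omega
    simp only [bset, mem_image, mem_range]
    exact ⟨k, hkn, by omega⟩
end bridge

lemma bset_eq (μ : YoungDiagram) : bset μ = (Finset.range (μ.colLen 0)).image (betaF μ) := rfl

section bridge2
variable (μ : YoungDiagram)
local notation "n" => μ.colLen 0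
local notation "L" => μ.rowLen

lemma row_decomp (r : ℕ) : hookCount r μ =
    ∑ i ∈ Finset.range n,
      ((Finset.range (L i)).filter fun j => r ∣ hookLength μ i j).card := by
  unfold hookCount
  rw [Finset.card_eq_sum_card_fiberwise (f := Prod.fst) (t := Finset.range n)
    (fun x hx => by
      simp only [Finset.mem_coe, mem_filter, YoungDiagram.mem_cells] at hx
      have h1 : x.1 < μ.colLen x.2 := by
        rw [← YoungDiagram.mem_iff_lt_colLen]
        exact hx.1
      have h2 := colLen_le μ x.2
      simp only [Finset.mem_coe, mem_range]
      omega)]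
  apply Finset.sum_congr rfl
  intro i hi
  apply Finset.card_nbij' (fun p => p.2) (fun j => (i, j))
  · intro p hp
    simp only [Finset.mem_coe, mem_filter, YoungDiagram.mem_cells, mem_range] at hp ⊢
    obtain ⟨⟨hmem, hdvd⟩, hfst⟩ := hp
    have : p.2 < L p.1 := by
      rw [← YoungDiagram.mem_iff_lt_rowLen]
      exact hmem
    rw [hfst] at this hdvd
    exact ⟨this, hdvd⟩
  · intro j hj
    simp only [Finset.mem_coe, mem_filter, YoungDiagram.mem_cells, mem_range] at hj ⊢
    exact ⟨⟨YoungDiagram.mem_iff_lt_rowLen.mpr hj.1, hj.2⟩, trivial⟩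
  · intro p hp
    simp only [Finset.mem_coe, mem_filter] at hp
    exact Prod.ext_iff.mpr ⟨hp.2.symm, rfl⟩
  · intro j _
    rfl

lemma row_eq (r : ℕ) {i : ℕ} (hi : i < n) :
    ((Finset.range (L i)).filter fun j => r ∣ hookLength μ i j).card
    = ((Finset.range (betaF μ i)).filter fun c =>
        c ∉ bset μ ∧ c % r = betaF μ i % r).card := by
  apply Finset.card_bij (fun j _ => phiF μ j)
  · intro j hj
    simp only [mem_filter, mem_range] at hj ⊢
    obtain ⟨hjL, hdvd⟩ := hj
    obtain ⟨hsum, hlt⟩ := hook_eq μ hi hjL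
    refine ⟨hlt, phi_not_mem μ j, ?_⟩
    have hhe : betaF μ i - phiF μ j = hookLength μ i j := by omega
    exact (Nat.modEq_iff_dvd' hlt.le).mpr (hhe ▸ hdvd)
  · intro j₁ h₁ j₂ h₂ heq
    by_contra hne
    rcases Nat.lt_or_ge j₁ j₂ with h | h
    · exact absurd heq (phi_mono μ h).ne
    · exact absurd heq.symm (phi_mono μ (by omega)).ne
  · intro c hc
    simp only [mem_filter, mem_range] at hc
    obtain ⟨hclt, hcB, hcmod⟩ := hc
    obtain ⟨j, hjL, hjc⟩ := phi_surj μ hi hclt hcB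
    refine ⟨j, ?_, hjc⟩
    simp only [mem_filter, mem_range]
    refine ⟨hjL, ?_⟩
    obtain ⟨hsum, hlt⟩ := hook_eq μ hi hjL
    have hdvd : r ∣ betaF μ i - c := (Nat.modEq_iff_dvd' (by omega)).mp hcmod
    have : betaF μ i - c = hookLength μ i j := by omega
    rwa [this] at hdvd

lemma bridge (r : ℕ) : hookCount r μ = Gg r (bset μ) := by
  rw [row_decomp μ r]
  unfold Gg
  rw [bset_eq μ, Finset.sum_image (beta_inj μ)]
  apply Finset.sum_congr rfl
  intro i hi
  simp only [mem_range] at hi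
  rw [row_eq μ r hi, ← bset_eq μ]

end bridge2

theorem stmt_2 (s t : ℕ) (hs : 0 < s) (ht : 0 < t) (lam : YoungDiagram) :
    t * hookCount (s * t) lam ≤ hookCount s lam := by
  rw [bridge lam (s * t), bridge lam s]
  exact hk_abstract s t hs ht (bset lam)
end

section
/- For every positive integer m and every partition λ, m times the number of boxes of λ whose hook length is divisible by m is at most the total number of boxes of λ; that is, m·h_m(λ) ≤ |λ|. -/
namespace HookAux

open Finset

lemma choose_two_succ (k : ℕ) : (k + 1).choose 2 = k + k.choose 2 := by
  rw [show (2:ℕ) = 1 + 1 from rfl, Nat.choose_succ_succ, Nat.choose_one_right]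

/-- Gauss sum as a binomial coefficient. -/
lemma sum_range_id_choose (t : ℕ) : ∑ k ∈ range t, k = t.choose 2 := by
  induction t with
  | zero => simp
  | succ t ih =>
    rw [Finset.sum_range_succ, ih, choose_two_succ]
    omega

/-- A finset of `n` distinct naturals has sum at least `0 + 1 + ... + (n-1)`. -/
lemma choose_two_le_sum (s : Finset ℕ) : s.card.choose 2 ≤ ∑ x ∈ s, x := by
  induction s using Finset.strongInduction with
  | _ s ih =>
    rcases s.eq_empty_or_nonempty with rfl | hs
    · simp
    · set x := s.max' hs with hxdef
      have hx : x ∈ s := s.max'_mem hs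
      have hsub : s ⊆ range (x + 1) := fun y hy =>
        mem_range.2 (Nat.lt_succ_of_le (s.le_max' y hy))
      have hcard : s.card ≤ x + 1 := by
        simpa using card_le_card hsub
      have hec : (s.erase x).card = s.card - 1 := card_erase_of_mem hx
      have hIH := ih (s.erase x) (erase_ssubset hx)
      have hsum : ∑ y ∈ s, y = x + ∑ y ∈ s.erase x, y := (Finset.add_sum_erase _ _ hx).symm
      obtain ⟨k, hk⟩ : ∃ k, s.card = k + 1 := ⟨s.card - 1, by
        have := card_pos.2 hs; omega⟩
      rw [hk, choose_two_succ, hsum]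
      rw [hec, hk] at hIH
      simp only [Nat.add_sub_cancel] at hIH
      omega

/-- Sum over beads of the number of beads strictly below. -/
lemma sum_card_inter_range (B : Finset ℕ) :
    ∑ b ∈ B, (B ∩ range b).card = B.card.choose 2 := by
  induction B using Finset.strongInduction with
  | _ B ih =>
    rcases B.eq_empty_or_nonempty with rfl | hB
    · simp
    · set x := B.max' hB with hxdef
      have hx : x ∈ B := B.max'_mem hB
      rw [← Finset.add_sum_erase B (fun b => (B ∩ range b).card) hx]
      have h1 : B ∩ range x = B.erase x := by
        ext y
        simp only [mem_inter, mem_range, mem_erase]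
        constructor
        · rintro ⟨hy, hlt⟩; exact ⟨by omega, hy⟩
        · rintro ⟨hne, hy⟩
          exact ⟨hy, lt_of_le_of_ne (B.le_max' y hy) hne⟩
      have h2 : ∀ b ∈ B.erase x, B ∩ range b = (B.erase x) ∩ range b := by
        intro b hb
        have hbx : b < x := lt_of_le_of_ne (B.le_max' b (mem_of_mem_erase hb))
          (ne_of_mem_erase hb)
        ext y
        simp only [mem_inter, mem_range, mem_erase]
        constructor
        · rintro ⟨hy, hlt⟩; exact ⟨⟨by omega, hy⟩, hlt⟩
        · rintro ⟨⟨_, hy⟩, hlt⟩; exact ⟨hy, hlt⟩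
      rw [Finset.sum_congr rfl (fun b hb => by rw [h2 b hb]), ih (B.erase x) (erase_ssubset hx), h1,
        card_erase_of_mem hx]
      obtain ⟨k, hk⟩ : ∃ k, B.card = k + 1 := ⟨B.card - 1, by
        have := card_pos.2 hB; omega⟩
      rw [hk, choose_two_succ]
      simp only [Nat.add_sub_cancel]

lemma gap_add_inter (B : Finset ℕ) (b : ℕ) :
    ((range b).filter (· ∉ B)).card + (B ∩ range b).card = b := by
  classical
  have h1 : (range b).filter (· ∉ B) = range b \ (B ∩ range b) := by
    ext y
    simp only [mem_filter, mem_range, mem_sdiff, mem_inter]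
    tauto
  have h2 : (B ∩ range b).card ≤ b := by
    have := card_le_card (inter_subset_right (s₁ := B) (s₂ := range b))
    simpa using this
  rw [h1, card_sdiff_of_subset inter_subset_right, card_range]
  omega

lemma sum_gaps (B : Finset ℕ) :
    ∑ b ∈ B, ((range b).filter (· ∉ B)).card + B.card.choose 2 = ∑ b ∈ B, b := by
  rw [← sum_card_inter_range, ← Finset.sum_add_distrib]
  exact Finset.sum_congr rfl fun b _ => gap_add_inter B b

/-- Basic mod/div facts for elements on a runner. -/
lemma runner_facts {m b g : ℕ} (hm : 0 < m) (hg : g < b) (hdvd : m ∣ b - g) :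
    g % m = b % m ∧ g / m < b / m := by
  obtain ⟨d, hd⟩ := hdvd
  have hb : b = g + m * d := by omega
  have h1 : g % m = b % m := by
    rw [hb, mul_comm, Nat.add_mul_mod_self_right]
  refine ⟨h1, ?_⟩
  have h2 : m * (g / m) + g % m = g := Nat.div_add_mod g m
  have h3 : m * (b / m) + b % m = b := Nat.div_add_mod b m
  by_contra hc
  push_neg at hc
  have := Nat.mul_le_mul_left m hc
  omega

lemma card_multiples (m : ℕ) (hm : 0 < m) (B : Finset ℕ) (b : ℕ) :
    ((range b).filter (fun g => g ∉ B ∧ m ∣ b - g)).card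
      = ((range (b / m)).filter (fun k => b % m + m * k ∉ B)).card := by
  have hb : m * (b / m) + b % m = b := Nat.div_add_mod b m
  apply Finset.card_bij' (i := fun g _ => g / m) (j := fun k _ => b % m + m * k)
  · intro g hg
    simp only [mem_filter, mem_range] at hg ⊢
    obtain ⟨hglt, hgnB, hdvd⟩ := hg
    obtain ⟨h1, h2⟩ := runner_facts hm hglt hdvd
    refine ⟨h2, ?_⟩
    have h3 : m * (g / m) + g % m = g := Nat.div_add_mod g m
    have : b % m + m * (g / m) = g := by omega
    rwa [this]
  · intro k hk
    simp only [mem_filter, mem_range] at hk ⊢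
    obtain ⟨hklt, hknB⟩ := hk
    have h1 : m * k < m * (b / m) := Nat.mul_lt_mul_left hm |>.2 hklt
    refine ⟨by omega, hknB, ?_⟩
    refine ⟨b / m - k, ?_⟩
    have h2 : m * (b / m - k) + m * k = m * (b / m) := by
      rw [← Nat.mul_add, Nat.sub_add_cancel hklt.le]
    omega
  · intro g hg
    simp only [mem_filter, mem_range] at hg
    obtain ⟨hglt, hgnB, hdvd⟩ := hg
    obtain ⟨h1, _⟩ := runner_facts hm hglt hdvd
    have h3 : m * (g / m) + g % m = g := Nat.div_add_mod g m
    omega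
  · intro k hk
    simp only [mem_filter, mem_range] at hk
    have h1 : (b % m + m * k) / m = k := by
      rw [Nat.add_mul_div_left _ _ hm, Nat.div_eq_of_lt (Nat.mod_lt b hm)]; omega
    omega

/-- The set of bead positions on runner `r`, divided by `m`. -/
def Kset (m : ℕ) (B : Finset ℕ) (r : ℕ) : Finset ℕ :=
  (B.filter (fun b => b % m = r)).image (· / m)

lemma injOn_div (m : ℕ) (B : Finset ℕ) (r : ℕ) :
    Set.InjOn (· / m) (B.filter (fun b => b % m = r)) := by
  intro b1 h1 b2 h2 heq
  simp only [coe_filter, Set.mem_setOf_eq] at h1 h2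
  have e1 := Nat.div_add_mod b1 m
  have e2 := Nat.div_add_mod b2 m
  simp only at heq
  rw [heq] at e1
  omega

lemma mem_Kset {m r k : ℕ} (hm : 0 < m) (hr : r < m) {B : Finset ℕ} :
    k ∈ Kset m B r ↔ r + m * k ∈ B := by
  simp only [Kset, mem_image, mem_filter]
  constructor
  · rintro ⟨b, ⟨hbB, hbr⟩, rfl⟩
    have h := Nat.div_add_mod b m
    have h2 : r + m * (b / m) = b := by omega
    rwa [h2]
  · intro h
    refine ⟨r + m * k, ⟨h, ?_⟩, ?_⟩
    · rw [Nat.add_mul_mod_self_left, Nat.mod_eq_of_lt hr]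
    · rw [Nat.add_mul_div_left _ _ hm, Nat.div_eq_of_lt hr]; omega

lemma sum_Kset (m : ℕ) (B : Finset ℕ) (r : ℕ) (g : ℕ → ℕ) :
    ∑ k ∈ Kset m B r, g k = ∑ b ∈ B.filter (fun b => b % m = r), g (b / m) :=
  Finset.sum_image (fun x hx y hy h => injOn_div m B r hx hy h)

lemma card_Kset (m : ℕ) (B : Finset ℕ) (r : ℕ) :
    (Kset m B r).card = (B.filter (fun b => b % m = r)).card :=
  Finset.card_image_of_injOn (injOn_div m B r)

theorem abstract_abacus (m : ℕ) (hm : 0 < m) (B : Finset ℕ) :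
    m * ∑ b ∈ B, ((range b).filter (fun g => g ∉ B ∧ m ∣ b - g)).card
      ≤ ∑ b ∈ B, ((range b).filter (· ∉ B)).card := by
  classical
  have hfib : ∀ f : ℕ → ℕ, ∑ b ∈ B, f b
      = ∑ r ∈ range m, ∑ b ∈ B.filter (fun b => b % m = r), f b :=
    fun f => (Finset.sum_fiberwise_of_maps_to
      (fun b _ => mem_range.2 (Nat.mod_lt b hm)) f).symm
  -- per-runner computation of the multiples count
  have hFr : ∀ r ∈ range m,
      ∑ b ∈ B.filter (fun b => b % m = r),
        ((range b).filter (fun g => g ∉ B ∧ m ∣ b - g)).card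
      = ∑ k ∈ Kset m B r, ((range k).filter (· ∉ Kset m B r)).card := by
    intro r hr
    rw [sum_Kset]
    apply Finset.sum_congr rfl
    intro b hb
    simp only [mem_filter] at hb
    rw [card_multiples m hm B b, hb.2]
    congr 1
    apply Finset.filter_congr
    intro k _
    rw [not_iff_not]
    exact (mem_Kset hm (mem_range.mp hr)).symm
  -- per-runner computation of the bead-position sum
  have hSr : ∀ r ∈ range m,
      ∑ b ∈ B.filter (fun b => b % m = r), b
      = r * (Kset m B r).card + m * ∑ k ∈ Kset m B r, k := by
    intro r hr
    have key : ∑ k ∈ Kset m B r, (r + m * k)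
        = ∑ b ∈ B.filter (fun b => b % m = r), b := by
      rw [sum_Kset]
      apply Finset.sum_congr rfl
      intro b hb
      simp only [mem_filter] at hb
      have h := Nat.div_add_mod b m
      omega
    rw [← key, Finset.sum_add_distrib, Finset.sum_const, smul_eq_mul, ← Finset.mul_sum]
    ring
  -- the core inequality
  have hcore : (∑ r ∈ range m, (Kset m B r).card).choose 2
      ≤ ∑ r ∈ range m, (r * (Kset m B r).card + m * ((Kset m B r).card.choose 2)) := by
    set C : Finset ℕ := (range m).biUnion
      (fun r => (range ((Kset m B r).card)).image (fun k => r + m * k)) with hC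
    have hmemim : ∀ r < m, ∀ x ∈ (range ((Kset m B r).card)).image (fun k => r + m * k),
        x % m = r := by
      intro r hr x hx
      simp only [mem_image, mem_range] at hx
      obtain ⟨k, _, rfl⟩ := hx
      rw [Nat.add_mul_mod_self_left, Nat.mod_eq_of_lt hr]
    have hdisj : ∀ r1 ∈ range m, ∀ r2 ∈ range m, r1 ≠ r2 →
        Disjoint ((range ((Kset m B r1).card)).image (fun k => r1 + m * k))
          ((range ((Kset m B r2).card)).image (fun k => r2 + m * k)) := by
      intro r1 h1 r2 h2 hne
      rw [Finset.disjoint_left]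
      intro x hx1 hx2
      exact hne ((hmemim r1 (mem_range.mp h1) x hx1).symm.trans
        (hmemim r2 (mem_range.mp h2) x hx2))
    have hinj2 : ∀ r : ℕ, Function.Injective (fun k => r + m * k) := by
      intro r k1 k2 h
      simp only at h
      have := Nat.eq_of_mul_eq_mul_left hm (by omega : m * k1 = m * k2)
      exact this
    have hcard : C.card = ∑ r ∈ range m, (Kset m B r).card := by
      rw [hC, Finset.card_biUnion hdisj]
      exact Finset.sum_congr rfl fun r _ =>
        (Finset.card_image_of_injective _ (hinj2 r)).trans (card_range _)
    have hsum : ∑ x ∈ C, x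
        = ∑ r ∈ range m, (r * (Kset m B r).card + m * ((Kset m B r).card.choose 2)) := by
      rw [hC, Finset.sum_biUnion (fun r1 h1 r2 h2 hne => hdisj r1 h1 r2 h2 hne)]
      apply Finset.sum_congr rfl
      intro r _
      rw [Finset.sum_image (fun x _ y _ h => hinj2 r h), Finset.sum_add_distrib,
        Finset.sum_const, smul_eq_mul, card_range, ← Finset.mul_sum,
        sum_range_id_choose]
      ring
    calc (∑ r ∈ range m, (Kset m B r).card).choose 2
        = C.card.choose 2 := by rw [hcard]
      _ ≤ ∑ x ∈ C, x := choose_two_le_sum C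
      _ = _ := hsum
  -- assemble
  have e1 : ∑ b ∈ B, ((range b).filter (fun g => g ∉ B ∧ m ∣ b - g)).card
      = ∑ r ∈ range m, ∑ k ∈ Kset m B r, ((range k).filter (· ∉ Kset m B r)).card := by
    rw [hfib]
    exact Finset.sum_congr rfl hFr
  have e2 : ∑ b ∈ B, b
      = ∑ r ∈ range m, (r * (Kset m B r).card + m * ∑ k ∈ Kset m B r, k) := by
    rw [hfib]
    exact Finset.sum_congr rfl hSr
  have e3 : B.card = ∑ r ∈ range m, (Kset m B r).card := by
    rw [Finset.card_eq_sum_ones, hfib (fun _ => 1)]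
    exact Finset.sum_congr rfl fun r _ => by
      rw [card_Kset, Finset.card_eq_sum_ones]
  have e4 := sum_gaps B
  have e5 : ∀ r ∈ range m,
      (∑ k ∈ Kset m B r, ((range k).filter (· ∉ Kset m B r)).card)
        + ((Kset m B r).card).choose 2 = ∑ k ∈ Kset m B r, k :=
    fun r _ => sum_gaps (Kset m B r)
  -- summed and multiplied versions
  have e6 : m * (∑ r ∈ range m, ∑ k ∈ Kset m B r, ((range k).filter (· ∉ Kset m B r)).card)
        + ∑ r ∈ range m, m * ((Kset m B r).card).choose 2
      = ∑ r ∈ range m, m * ∑ k ∈ Kset m B r, k := by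
    rw [Finset.mul_sum, ← Finset.sum_add_distrib]
    apply Finset.sum_congr rfl
    intro r hr
    rw [← Nat.mul_add, e5 r hr]
  have e7 : ∑ r ∈ range m, (r * (Kset m B r).card + m * ∑ k ∈ Kset m B r, k)
      = ∑ r ∈ range m, r * (Kset m B r).card + ∑ r ∈ range m, m * ∑ k ∈ Kset m B r, k :=
    Finset.sum_add_distrib
  have e8 : ∑ r ∈ range m, (r * (Kset m B r).card + m * ((Kset m B r).card.choose 2))
      = ∑ r ∈ range m, r * (Kset m B r).card
        + ∑ r ∈ range m, m * ((Kset m B r).card.choose 2) :=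
    Finset.sum_add_distrib
  rw [e1]
  rw [e3] at e4
  rw [e2, e7] at e4
  rw [e8] at hcore
  omega

/-! ### Young diagram part -/

/-- Number of rows of `μ`. -/
def nrows (μ : YoungDiagram) : ℕ := μ.colLen 0

/-- Beta numbers (first-column hook lengths, shifted). -/
def beta (μ : YoungDiagram) (i : ℕ) : ℕ := μ.rowLen i + (nrows μ - 1 - i)

/-- The beta-set of `μ`. -/
def BSet (μ : YoungDiagram) : Finset ℕ := (range (nrows μ)).image (beta μ)

/-- Positions of gaps corresponding to columns. -/
def gmap (μ : YoungDiagram) (j : ℕ) : ℕ := j + (nrows μ - μ.colLen j)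

lemma colLen_le_s5 (μ : YoungDiagram) (j : ℕ) : μ.colLen j ≤ nrows μ :=
  μ.colLen_anti 0 j (Nat.zero_le j)

lemma beta_strict_anti (μ : YoungDiagram) {i k : ℕ} (h : i < k) (hk : k < nrows μ) :
    beta μ k < beta μ i := by
  have hr : μ.rowLen k ≤ μ.rowLen i := μ.rowLen_anti i k h.le
  unfold beta
  omega

lemma beta_injOn (μ : YoungDiagram) :
    Set.InjOn (beta μ) (range (nrows μ)) := by
  intro a ha b hb heq
  simp only [coe_range, Set.mem_Iio] at ha hb
  rcases lt_trichotomy a b with h | h | h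
  · exact absurd heq (by have := beta_strict_anti μ h hb; omega)
  · exact h
  · exact absurd heq (by have := beta_strict_anti μ h ha; omega)

lemma gmap_strictMono (μ : YoungDiagram) : StrictMono (gmap μ) := by
  intro j1 j2 h
  have h1 : μ.colLen j2 ≤ μ.colLen j1 := μ.colLen_anti j1 j2 h.le
  have h2 := colLen_le_s5 μ j1
  have h3 := colLen_le_s5 μ j2
  unfold gmap
  omega

lemma gmap_not_mem (μ : YoungDiagram) (j : ℕ) : gmap μ j ∉ BSet μ := by
  intro hmem
  simp only [BSet, mem_image, mem_range] at hmem
  obtain ⟨k, hk, heq⟩ := hmem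
  have hc := colLen_le_s5 μ j
  by_cases h : (k, j) ∈ μ
  · have h1 : j < μ.rowLen k := YoungDiagram.mem_iff_lt_rowLen.mp h
    have h2 : k < μ.colLen j := YoungDiagram.mem_iff_lt_colLen.mp h
    unfold beta gmap at heq
    omega
  · have h1 : ¬ j < μ.rowLen k := fun hc' => h (YoungDiagram.mem_iff_lt_rowLen.mpr hc')
    have h2 : ¬ k < μ.colLen j := fun hc' => h (YoungDiagram.mem_iff_lt_colLen.mpr hc')
    unfold beta gmap at heq
    omega

lemma hook_identity (μ : YoungDiagram) {i j : ℕ} (h : (i, j) ∈ μ) :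
    beta μ i = hookLength μ i j + gmap μ j ∧ 1 ≤ hookLength μ i j ∧ i < nrows μ := by
  have h1 : j < μ.rowLen i := YoungDiagram.mem_iff_lt_rowLen.mp h
  have h2 : i < μ.colLen j := YoungDiagram.mem_iff_lt_colLen.mp h
  have h3 := colLen_le_s5 μ j
  have h4 : i < nrows μ := lt_of_lt_of_le h2 h3
  unfold beta gmap hookLength
  omega

lemma row_image (μ : YoungDiagram) {i : ℕ} (hi : i < nrows μ) :
    (range (μ.rowLen i)).image (gmap μ) = (range (beta μ i)).filter (· ∉ BSet μ) := by
  apply Finset.eq_of_subset_of_card_le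
  · intro x hx
    simp only [mem_image, mem_range] at hx
    obtain ⟨j, hj, rfl⟩ := hx
    have hmem : (i, j) ∈ μ := YoungDiagram.mem_iff_lt_rowLen.mpr hj
    obtain ⟨he, hh, _⟩ := hook_identity μ hmem
    simp only [mem_filter, mem_range]
    exact ⟨by omega, gmap_not_mem μ j⟩
  · -- card of RHS ≤ card of LHS, both equal rowLen i
    have hL : ((range (μ.rowLen i)).image (gmap μ)).card = μ.rowLen i := by
      rw [Finset.card_image_of_injective _ (gmap_strictMono μ).injective, card_range]
    have hinter : BSet μ ∩ range (beta μ i)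
        = ((range (nrows μ)).filter (fun k => i < k)).image (beta μ) := by
      ext x
      simp only [mem_inter, mem_image, mem_range, mem_filter, BSet]
      constructor
      · rintro ⟨⟨k, hk, rfl⟩, hlt⟩
        refine ⟨k, ⟨hk, ?_⟩, rfl⟩
        by_contra hc
        push_neg at hc
        rcases Nat.lt_or_ge k i with h' | h'
        · have := beta_strict_anti μ h' hi; omega
        · have hki : k = i := by omega
          rw [hki] at hlt
          omega
      · rintro ⟨k, ⟨hk, hik⟩, rfl⟩
        exact ⟨⟨k, hk, rfl⟩, beta_strict_anti μ hik hk⟩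
    have hintercard : (BSet μ ∩ range (beta μ i)).card = nrows μ - 1 - i := by
      rw [hinter, Finset.card_image_of_injOn (fun a ha b hb heq => by
        simp only [coe_filter, mem_range, Set.mem_setOf_eq] at ha hb
        exact beta_injOn μ (by simp [ha.1]) (by simp [hb.1]) heq)]
      have : (range (nrows μ)).filter (fun k => i < k) = Finset.Ico (i + 1) (nrows μ) := by
        ext k
        simp only [mem_filter, mem_range, mem_Ico]
        omega
      rw [this, Nat.card_Ico]
      omega
    have hR := gap_add_inter (BSet μ) (beta μ i)
    rw [hintercard] at hR
    have hbeta : beta μ i = μ.rowLen i + (nrows μ - 1 - i) := rfl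
    omega

lemma row_gap_card (μ : YoungDiagram) {i : ℕ} (hi : i < nrows μ) :
    ((range (beta μ i)).filter (· ∉ BSet μ)).card = μ.rowLen i := by
  rw [← row_image μ hi, Finset.card_image_of_injective _ (gmap_strictMono μ).injective,
    card_range]

lemma row_filter_card (μ : YoungDiagram) (m : ℕ) {i : ℕ} (hi : i < nrows μ) :
    ((range (μ.rowLen i)).filter (fun j => m ∣ hookLength μ i j)).card
      = ((range (beta μ i)).filter (fun g => g ∉ BSet μ ∧ m ∣ beta μ i - g)).card := by
  have h1 : (range (beta μ i)).filter (fun g => g ∉ BSet μ ∧ m ∣ beta μ i - g)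
      = ((range (beta μ i)).filter (· ∉ BSet μ)).filter (fun g => m ∣ beta μ i - g) := by
    rw [Finset.filter_filter]
  rw [h1, ← row_image μ hi, Finset.filter_image]
  rw [Finset.card_image_of_injective _ (gmap_strictMono μ).injective]
  congr 1
  apply Finset.filter_congr
  intro j hj
  simp only [mem_range] at hj
  have hmem : (i, j) ∈ μ := YoungDiagram.mem_iff_lt_rowLen.mpr hj
  obtain ⟨he, _, _⟩ := hook_identity μ hmem
  constructor <;> intro h <;> [skip; skip]
  · have : beta μ i - gmap μ j = hookLength μ i j := by omega
    rwa [this]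
  · have : beta μ i - gmap μ j = hookLength μ i j := by omega
    rwa [this] at h

lemma cells_filter_card (μ : YoungDiagram) (p : ℕ × ℕ → Prop) [DecidablePred p] :
    (μ.cells.filter p).card
      = ∑ i ∈ range (nrows μ), ((range (μ.rowLen i)).filter (fun j => p (i, j))).card := by
  rw [Finset.card_eq_sum_card_fiberwise (f := Prod.fst) (t := range (nrows μ))
    (fun c hc => by
      simp only [mem_coe, mem_filter, YoungDiagram.mem_cells] at hc
      have h2 : c.1 < μ.colLen c.2 := YoungDiagram.mem_iff_lt_colLen.mp (by
        rw [show ((c.1 : ℕ), (c.2 : ℕ)) = c from rfl]; exact hc.1)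
      exact mem_range.2 (lt_of_lt_of_le h2 (colLen_le_s5 μ c.2)))]
  apply Finset.sum_congr rfl
  intro i _
  have hset : (μ.cells.filter p).filter (fun c => c.1 = i)
      = ((range (μ.rowLen i)).filter (fun j => p (i, j))).image (fun j => (i, j)) := by
    ext c
    simp only [mem_filter, YoungDiagram.mem_cells, mem_image, mem_range]
    constructor
    · rintro ⟨⟨hmem, hp⟩, hfst⟩
      refine ⟨c.2, ⟨?_, ?_⟩, ?_⟩
      · rw [← hfst]
        exact YoungDiagram.mem_iff_lt_rowLen.mp (by
          rw [show ((c.1 : ℕ), (c.2 : ℕ)) = c from rfl]; exact hmem)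
      · rw [← hfst]
        rw [show (c.1, c.2) = c from rfl]
        exact hp
      · rw [← hfst]
    · rintro ⟨j, ⟨hj, hp⟩, rfl⟩
      exact ⟨⟨YoungDiagram.mem_iff_lt_rowLen.mpr hj, hp⟩, rfl⟩
  rw [hset, Finset.card_image_of_injective _ (fun a b h => by
    simpa using congrArg Prod.snd h)]

theorem main_ineq (m : ℕ) (hm : 0 < m) (μ : YoungDiagram) :
    m * (μ.cells.filter fun c => m ∣ hookLength μ c.1 c.2).card ≤ μ.cells.card := by
  have h1 : (μ.cells.filter fun c => m ∣ hookLength μ c.1 c.2).card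
      = ∑ i ∈ range (nrows μ),
          ((range (μ.rowLen i)).filter (fun j => m ∣ hookLength μ i j)).card :=
    cells_filter_card μ (fun c => m ∣ hookLength μ c.1 c.2)
  have h2 : μ.cells.card = ∑ i ∈ range (nrows μ), μ.rowLen i := by
    have := cells_filter_card μ (fun _ => True)
    simpa using this
  rw [h1, h2]
  have h3 : ∑ i ∈ range (nrows μ),
        ((range (μ.rowLen i)).filter (fun j => m ∣ hookLength μ i j)).card
      = ∑ b ∈ BSet μ, ((range b).filter (fun g => g ∉ BSet μ ∧ m ∣ b - g)).card := by
    rw [BSet, Finset.sum_image (fun x hx y hy h => beta_injOn μ (by simpa using hx)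
      (by simpa using hy) h)]
    exact Finset.sum_congr rfl fun i hi => row_filter_card μ m (mem_range.mp hi)
  have h4 : ∑ b ∈ BSet μ, ((range b).filter (· ∉ BSet μ)).card
      = ∑ i ∈ range (nrows μ), μ.rowLen i := by
    rw [BSet, Finset.sum_image (fun x hx y hy h => beta_injOn μ (by simpa using hx)
      (by simpa using hy) h)]
    exact Finset.sum_congr rfl fun i hi => row_gap_card μ (mem_range.mp hi)
  rw [h3, ← h4]
  exact abstract_abacus m hm (BSet μ)

end HookAux

theorem stmt_5 (m : ℕ) (hm : 0 < m) (lam : YoungDiagram) :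
    m * hookCount m lam ≤ lam.cells.card := by
  unfold hookCount
  exact HookAux.main_ineq m hm lam
end

section
/- There exists a partition λ such that H_2(λ)·H_3(λ)·H_5(λ) does not divide H_1(λ)·H_30(λ). In fact, for λ the partition with 55 parts all equal to 66, the 11-adic valuation of H_1(λ)·H_30(λ) is strictly smaller than that of H_2(λ)·H_3(λ)·H_5(λ), so the ratio H_1(λ)·H_30(λ) / (H_2(λ)·H_3(λ)·H_5(λ)) is not an integer. -/
set_option maxRecDepth 4000 in
/-- The rectangular partition with 55 parts all equal to 66, as a Young diagram. -/
def rect66_55 : YoungDiagram where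
  cells := Finset.range 55 ×ˢ Finset.range 66
  isLowerSet := by
    intro a b hba ha
    simp only [Finset.coe_product, Finset.coe_range, Set.mem_prod, Set.mem_Iio] at *
    obtain ⟨h1, h2⟩ := Prod.le_def.mp hba
    exact ⟨lt_of_le_of_lt h1 ha.1, lt_of_le_of_lt h2 ha.2⟩

set_option maxRecDepth 100000

-- auxiliary
private instance fact11 : Fact (Nat.Prime 11) := ⟨by norm_num⟩

private lemma mem_rect {i j : ℕ} : (i, j) ∈ rect66_55 ↔ i < 55 ∧ j < 66 := by
  rw [← YoungDiagram.mem_cells]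
  show (i, j) ∈ Finset.range 55 ×ˢ Finset.range 66 ↔ _
  simp [Finset.mem_product]

private lemma hook_rect {i j : ℕ} (hi : i < 55) (hj : j < 66) :
    hookLength rect66_55 i j = 120 - i - j := by
  have hrow : rect66_55.rowLen i = 66 := by
    refine le_antisymm ?_ ?_
    · by_contra h
      have : (i, 66) ∈ rect66_55 := YoungDiagram.mem_iff_lt_rowLen.mpr (by omega)
      simp [mem_rect] at this
    · exact YoungDiagram.mem_iff_lt_rowLen.mp (mem_rect.mpr ⟨hi, by omega⟩)
  have hcol : rect66_55.colLen j = 55 := by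
    refine le_antisymm ?_ ?_
    · by_contra h
      have : (55, j) ∈ rect66_55 := YoungDiagram.mem_iff_lt_colLen.mpr (by omega)
      simp [mem_rect] at this
    · exact YoungDiagram.mem_iff_lt_colLen.mp (mem_rect.mpr ⟨by omega, hj⟩)
  rw [hookLength, hrow, hcol]
  omega

private lemma val_small {n : ℕ} (h0 : 0 < n) (h : n < 121) :
    padicValNat 11 n = if 11 ∣ n then 1 else 0 := by
  split_ifs with hd
  · obtain ⟨m, rfl⟩ := hd
    have hm : m ≠ 0 := by omega
    have hnd : ¬ 11 ∣ m := by
      rintro ⟨k, rfl⟩; omega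
    rw [padicValNat.mul (by norm_num) hm, padicValNat_self,
      padicValNat.eq_zero_of_not_dvd hnd]
  · exact padicValNat.eq_zero_of_not_dvd hd

private lemma padicValNat_prod {α : Type*} {s : Finset α} {f : α → ℕ}
    (hf : ∀ a ∈ s, f a ≠ 0) :
    padicValNat 11 (∏ a ∈ s, f a) = ∑ a ∈ s, padicValNat 11 (f a) := by
  classical
  induction s using Finset.cons_induction with
  | empty => simp
  | cons a s ha ih =>
    rw [Finset.prod_cons, Finset.sum_cons,
      padicValNat.mul (hf a (Finset.mem_cons_self _ _))
        (Finset.prod_ne_zero_iff.mpr fun b hb => hf b (Finset.mem_cons_of_mem hb)),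
      ih fun b hb => hf b (Finset.mem_cons_of_mem hb)]

private lemma hookProd_ne_zero (r : ℕ) (hr : r ≠ 0) : hookProd r rect66_55 ≠ 0 := by
  rw [hookProd]
  refine Finset.prod_ne_zero_iff.mpr fun c hc => ?_
  rw [Finset.mem_filter] at hc
  obtain ⟨hcmem, hdvd⟩ := hc
  rw [YoungDiagram.mem_cells] at hcmem
  obtain ⟨i, j⟩ := c
  obtain ⟨hi, hj⟩ := mem_rect.mp hcmem
  have hpos : 0 < hookLength rect66_55 i j := by rw [hook_rect hi hj]; omega
  exact Nat.ne_of_gt (Nat.div_pos (Nat.le_of_dvd hpos hdvd) (Nat.pos_of_ne_zero hr))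

private lemma key (r : ℕ) (hr : r ≠ 0) :
    padicValNat 11 (hookProd r rect66_55) =
      ((Finset.range 55 ×ˢ Finset.range 66).filter
        fun c : ℕ × ℕ => 11 * r ∣ 120 - c.1 - c.2).card := by
  classical
  have hcells : rect66_55.cells = Finset.range 55 ×ˢ Finset.range 66 := rfl
  rw [hookProd, padicValNat_prod (fun c hc => by
    rw [Finset.mem_filter] at hc
    obtain ⟨hcmem, hdvd⟩ := hc
    rw [YoungDiagram.mem_cells] at hcmem
    obtain ⟨i, j⟩ := c
    obtain ⟨hi, hj⟩ := mem_rect.mp hcmem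
    have hpos : 0 < hookLength rect66_55 i j := by rw [hook_rect hi hj]; omega
    exact Nat.ne_of_gt (Nat.div_pos (Nat.le_of_dvd hpos hdvd) (Nat.pos_of_ne_zero hr)))]
  have hterm : ∀ c ∈ rect66_55.cells.filter
      (fun c => r ∣ hookLength rect66_55 c.1 c.2),
      padicValNat 11 (hookLength rect66_55 c.1 c.2 / r) =
        if 11 ∣ hookLength rect66_55 c.1 c.2 / r then 1 else 0 := by
    intro c hc
    rw [Finset.mem_filter] at hc
    obtain ⟨hcmem, hdvd⟩ := hc
    rw [YoungDiagram.mem_cells] at hcmem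
    obtain ⟨i, j⟩ := c
    obtain ⟨hi, hj⟩ := mem_rect.mp hcmem
    have hh : hookLength rect66_55 i j = 120 - i - j := hook_rect hi hj
    have hpos : 0 < hookLength rect66_55 i j := by rw [hh]; omega
    have hle : hookLength rect66_55 i j ≤ 120 := by rw [hh]; omega
    refine val_small (Nat.div_pos (Nat.le_of_dvd hpos hdvd) (Nat.pos_of_ne_zero hr)) ?_
    exact lt_of_le_of_lt (Nat.div_le_self _ _) (lt_of_le_of_lt hle (by norm_num))
  rw [Finset.sum_congr rfl hterm]
  · rw [Finset.sum_boole, Finset.filter_filter, Nat.cast_id, hcells]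
    apply congrArg Finset.card
    ext c
    obtain ⟨i, j⟩ := c
    simp only [Finset.mem_filter, Finset.mem_product, Finset.mem_range]
    constructor
    · rintro ⟨⟨hi, hj⟩, h1, h2⟩
      rw [hook_rect hi hj] at h1 h2
      exact ⟨⟨hi, hj⟩, by rwa [Nat.dvd_div_iff_mul_dvd h1, mul_comm] at h2⟩
    · rintro ⟨⟨hi, hj⟩, h⟩
      have h1 : r ∣ 120 - i - j := (dvd_mul_left r 11).trans h
      refine ⟨⟨hi, hj⟩, ?_, ?_⟩ <;> rw [hook_rect hi hj]
      · exact h1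
      · rwa [Nat.dvd_div_iff_mul_dvd h1, mul_comm]

set_option maxRecDepth 100000 in
private lemma counts :
    ((Finset.range 55 ×ˢ Finset.range 66).filter
        fun c : ℕ × ℕ => 11 * 1 ∣ 120 - c.1 - c.2).card = 330 ∧
    ((Finset.range 55 ×ˢ Finset.range 66).filter
        fun c : ℕ × ℕ => 11 * 30 ∣ 120 - c.1 - c.2).card = 0 ∧
    ((Finset.range 55 ×ˢ Finset.range 66).filter
        fun c : ℕ × ℕ => 11 * 2 ∣ 120 - c.1 - c.2).card = 165 ∧
    ((Finset.range 55 ×ˢ Finset.range 66).filter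
        fun c : ℕ × ℕ => 11 * 3 ∣ 120 - c.1 - c.2).card = 110 ∧
    ((Finset.range 55 ×ˢ Finset.range 66).filter
        fun c : ℕ × ℕ => 11 * 5 ∣ 120 - c.1 - c.2).card = 66 := by
  refine ⟨by decide, by decide, by decide, by decide, by decide⟩

theorem stmt_6 :
    padicValNat 11 (hookProd 1 rect66_55 * hookProd 30 rect66_55) <
      padicValNat 11 (hookProd 2 rect66_55 * hookProd 3 rect66_55 * hookProd 5 rect66_55) ∧
    ¬ (hookProd 2 rect66_55 * hookProd 3 rect66_55 * hookProd 5 rect66_55 ∣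
        hookProd 1 rect66_55 * hookProd 30 rect66_55) := by
  obtain ⟨c1, c30, c2, c3, c5⟩ := counts
  have h1 := key 1 (by norm_num); have h30 := key 30 (by norm_num)
  have h2 := key 2 (by norm_num); have h3 := key 3 (by norm_num)
  have h5 := key 5 (by norm_num)
  have n1 := hookProd_ne_zero 1 (by norm_num)
  have n30 := hookProd_ne_zero 30 (by norm_num)
  have n2 := hookProd_ne_zero 2 (by norm_num)
  have n3 := hookProd_ne_zero 3 (by norm_num)
  have n5 := hookProd_ne_zero 5 (by norm_num)
  have vA : padicValNat 11 (hookProd 1 rect66_55 * hookProd 30 rect66_55) = 330 := by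
    rw [padicValNat.mul n1 n30, h1, h30, c1, c30]
  have vB : padicValNat 11
      (hookProd 2 rect66_55 * hookProd 3 rect66_55 * hookProd 5 rect66_55) = 341 := by
    rw [padicValNat.mul (mul_ne_zero n2 n3) n5, padicValNat.mul n2 n3, h2, h3, h5, c2, c3, c5]
  refine ⟨by rw [vA, vB]; norm_num, fun hdvd => ?_⟩
  have hA : hookProd 1 rect66_55 * hookProd 30 rect66_55 ≠ 0 := mul_ne_zero n1 n30
  have : (341 : ℕ) ≤ 330 := by
    rw [← vA, ← vB]
    exact (padicValNat_dvd_iff_le hA).mp (dvd_trans pow_padicValNat_dvd hdvd)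
  omega
end

section
/- Let γ = (γ_1,…,γ_K) and δ = (δ_1,…,δ_L) be vectors of positive integers. Then the ratio v(n; γ, δ) := ∏_{k=1}^K ⌊n/γ_k⌋! / ∏_{l=1}^L ⌊n/δ_l⌋! is an integer for all positive integers n if and only if f(x; γ, δ) := Σ_{k=1}^K ⌊x/γ_k⌋ − Σ_{l=1}^L ⌊x/δ_l⌋ is nonnegative for all real x > 0. -/
/-- `floorSumDiff γ δ x = Σ_k ⌊x/γ_k⌋ − Σ_l ⌊x/δ_l⌋`. -/
noncomputable def floorSumDiff {K L : ℕ} (γ : Fin K → ℕ) (δ : Fin L → ℕ) (x : ℝ) : ℤ :=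
  (∑ k, ⌊x / (γ k : ℝ)⌋) - ∑ l, ⌊x / (δ l : ℝ)⌋

private lemma floorA (x : ℝ) (hx : 0 ≤ x) (m : ℕ) : ⌊x / (m : ℝ)⌋ = ((⌊x⌋₊ / m : ℕ) : ℤ) := by
  rw [← Nat.floor_div_natCast, Int.natCast_floor_eq_floor (div_nonneg hx (Nat.cast_nonneg m))]

private lemma fsd_nonneg_iff {K L : ℕ} (γ : Fin K → ℕ) (δ : Fin L → ℕ) {x : ℝ} (hx : 0 ≤ x) :
    0 ≤ floorSumDiff γ δ x ↔ (∑ l, ⌊x⌋₊ / δ l) ≤ ∑ k, ⌊x⌋₊ / γ k := by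
  unfold floorSumDiff
  rw [sub_nonneg]
  simp only [floorA x hx]
  rw [← Nat.cast_sum, ← Nat.cast_sum, Nat.cast_le]

private lemma legendre2 {p : ℕ} (hp : p.Prime) {n g : ℕ} (hn : n < p) :
    Nat.factorization (Nat.factorial (n * p / g)) p = n / g := by
  haveI : Fact p.Prime := ⟨hp⟩
  rw [Nat.factorization_def _ hp, padicValNat_factorial (b := 2)]
  · rw [Finset.sum_Ico_eq_sum_range]
    simp only [show 2 - 1 = 1 from rfl, Finset.sum_range_one]
    rw [pow_one, Nat.div_div_eq_div_mul, Nat.mul_div_mul_right _ _ hp.pos]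
  · rcases Nat.eq_zero_or_pos (n * p / g) with h | h
    · simp [h]
    · apply Nat.log_lt_of_lt_pow h.ne'
      calc n * p / g ≤ n * p := Nat.div_le_self _ _
        _ < p * p := by
            apply Nat.mul_lt_mul_of_lt_of_le hn le_rfl hp.pos
        _ = p ^ 2 := (sq p).symm

theorem stmt_9 (K L : ℕ) (γ : Fin K → ℕ) (δ : Fin L → ℕ)
    (hγ : ∀ k, 0 < γ k) (hδ : ∀ l, 0 < δ l) :
    (∀ n : ℕ, 0 < n → (∏ l, Nat.factorial (n / δ l)) ∣ ∏ k, Nat.factorial (n / γ k)) ↔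
    ∀ x : ℝ, 0 < x → 0 ≤ floorSumDiff γ δ x := by
  constructor
  · intro hdvd x hx
    rw [fsd_nonneg_iff γ δ hx.le]
    set n := ⌊x⌋₊ with hn
    rcases Nat.eq_zero_or_pos n with h0 | h0
    · simp [h0]
    · obtain ⟨p, hpn, hp⟩ := Nat.exists_infinite_primes (n + 1)
      have hnp : n < p := hpn
      have hd := hdvd (n * p) (Nat.mul_pos h0 hp.pos)
      have hne : ∀ m : ℕ, Nat.factorial m ≠ 0 := fun m => (Nat.factorial_pos m).ne'
      have hled : (∏ l, Nat.factorial (n * p / δ l)).factorization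
          ≤ (∏ k, Nat.factorial (n * p / γ k)).factorization := by
        rw [Nat.factorization_le_iff_dvd (Finset.prod_ne_zero_iff.2 fun _ _ => hne _)
          (Finset.prod_ne_zero_iff.2 fun _ _ => hne _)]
        exact hd
      have := hled p
      rw [Nat.factorization_prod (fun _ _ => hne _),
        Nat.factorization_prod (fun _ _ => hne _)] at this
      simp only [Finset.sum_apply'] at this
      simpa only [legendre2 hp hnp] using this
  · intro hf n hn
    have hne : ∀ m : ℕ, Nat.factorial m ≠ 0 := fun m => (Nat.factorial_pos m).ne'
    rw [← Nat.factorization_le_iff_dvd (Finset.prod_ne_zero_iff.2 fun _ _ => hne _)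
      (Finset.prod_ne_zero_iff.2 fun _ _ => hne _)]
    intro p
    by_cases hp : p.Prime
    · haveI : Fact p.Prime := ⟨hp⟩
      rw [Nat.factorization_prod (fun _ _ => hne _),
        Nat.factorization_prod (fun _ _ => hne _)]
      simp only [Finset.sum_apply']
      have hleg : ∀ g : ℕ, Nat.factorization (Nat.factorial (n / g)) p
          = ∑ i ∈ Finset.Ico 1 (n + 1), n / (g * p ^ i) := by
        intro g
        rw [Nat.factorization_def _ hp, padicValNat_factorial (b := n + 1)]
        · exact Finset.sum_congr rfl fun i _ => by rw [Nat.div_div_eq_div_mul]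
        · exact Nat.lt_succ_of_le ((Nat.log_mono_right (Nat.div_le_self _ _)).trans
            (Nat.log_le_self p n))
      simp only [hleg]
      rw [Finset.sum_comm, Finset.sum_comm (s := Finset.univ)]
      apply Finset.sum_le_sum
      intro i _
      have hxpos : (0 : ℝ) < (n : ℝ) / (p ^ i : ℕ) :=
        div_pos (Nat.cast_pos.2 hn) (Nat.cast_pos.2 (pow_pos hp.pos i))
      have := (fsd_nonneg_iff γ δ hxpos.le).1 (hf _ hxpos)
      have hfl : ⌊(n : ℝ) / ((p ^ i : ℕ) : ℝ)⌋₊ = n / p ^ i := Nat.floor_div_eq_div n (p ^ i)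
      rw [hfl] at this
      calc (∑ l, n / (δ l * p ^ i)) = ∑ l, n / p ^ i / δ l := by
            refine Finset.sum_congr rfl fun l _ => ?_
            rw [Nat.div_div_eq_div_mul, Nat.mul_comm]
        _ ≤ ∑ k, n / p ^ i / γ k := this
        _ = ∑ k, n / (γ k * p ^ i) := by
            refine Finset.sum_congr rfl fun k _ => ?_
            rw [Nat.div_div_eq_div_mul, Nat.mul_comm]
    · rw [Nat.factorization_eq_zero_of_not_prime _ hp, Nat.factorization_eq_zero_of_not_prime _ hp]
end

section
/- Let γ = (γ_1,…,γ_K) and δ = (δ_1,…,δ_L) be vectors of positive integers satisfying the balancing condition Σ_{k=1}^K 1/γ_k = Σ_{l=1}^L 1/δ_l, and suppose that v(n; γ, δ) := ∏_{k=1}^K ⌊n/γ_k⌋! / ∏_{l=1}^L ⌊n/δ_l⌋! is an integer for every positive integer n. Then 0 ≤ f(x; γ, δ) ≤ L − K for all real x > 0. -/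
/-- Legendre valuation computation: for a prime `p > n` and `0 < d`,
`v_p((n*p/d)!) = n/d`. -/
lemma aux_padic (p n d : ℕ) (hp : p.Prime) (hn : n < p) (hd : 0 < d) :
    padicValNat p ((n * p / d).factorial) = n / d := by
  haveI : Fact p.Prime := ⟨hp⟩
  have hlog : Nat.log p (n * p / d) < 2 := by
    rcases Nat.eq_zero_or_pos (n * p / d) with h | h
    · simp [h]
    · refine Nat.log_lt_of_lt_pow h.ne' ?_
      calc n * p / d ≤ n * p := Nat.div_le_self _ _
        _ < p * p := (Nat.mul_lt_mul_right hp.pos).mpr hn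
        _ = p ^ 2 := (sq p).symm
  rw [padicValNat_factorial (b := 2) hlog]
  have h12 : Finset.Ico 1 2 = {1} := rfl
  rw [h12, Finset.sum_singleton, pow_one, Nat.div_div_eq_div_mul,
    Nat.mul_comm d p, ← Nat.mul_div_mul_right n d hp.pos, Nat.mul_comm d p]

/-- Key nonnegativity lemma from the integrality hypothesis. -/
lemma aux_nonneg {K L : ℕ} (γ : Fin K → ℕ) (δ : Fin L → ℕ)
    (hγ : ∀ k, 0 < γ k) (hδ : ∀ l, 0 < δ l)
    (hint : ∀ n : ℕ, 0 < n → (∏ l, Nat.factorial (n / δ l)) ∣ ∏ k, Nat.factorial (n / γ k))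
    (n : ℕ) : ∑ l, n / δ l ≤ ∑ k, n / γ k := by
  rcases Nat.eq_zero_or_pos n with rfl | hn
  · simp
  obtain ⟨p, hpn, hp⟩ := Nat.exists_infinite_primes (n + 1)
  haveI : Fact p.Prime := ⟨hp⟩
  have hnp : n < p := hpn
  have hNpos : 0 < n * p := Nat.mul_pos hn hp.pos
  have hdvd := hint (n * p) hNpos
  have hL0 : (∏ l, Nat.factorial (n * p / δ l)) ≠ 0 :=
    Finset.prod_ne_zero_iff.mpr fun l _ => (Nat.factorial_pos _).ne'
  have hR0 : (∏ k, Nat.factorial (n * p / γ k)) ≠ 0 :=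
    Finset.prod_ne_zero_iff.mpr fun k _ => (Nat.factorial_pos _).ne'
  have hfac := (Nat.factorization_le_iff_dvd hL0 hR0).mpr hdvd p
  rw [Nat.factorization_prod (fun l _ => (Nat.factorial_pos _).ne'),
    Nat.factorization_prod (fun k _ => (Nat.factorial_pos _).ne')] at hfac
  simp only [Finset.sum_apply', Nat.factorization_def _ hp] at hfac
  calc ∑ l, n / δ l = ∑ l, padicValNat p ((n * p / δ l).factorial) := by
        refine Finset.sum_congr rfl fun l _ => ?_
        rw [aux_padic p n (δ l) hp hnp (hδ l)]
    _ ≤ ∑ k, padicValNat p ((n * p / γ k).factorial) := hfac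
    _ = ∑ k, n / γ k := by
        refine Finset.sum_congr rfl fun k _ => ?_
        rw [aux_padic p n (γ k) hp hnp (hγ k)]

lemma aux_floor (x : ℝ) (hx : 0 ≤ x) (d : ℕ) : ⌊x / (d : ℝ)⌋ = ((⌊x⌋₊ / d : ℕ) : ℤ) := by
  rw [← Int.natCast_floor_eq_floor (div_nonneg hx (Nat.cast_nonneg d)), Nat.floor_div_natCast]

theorem stmt_13 (K L : ℕ) (γ : Fin K → ℕ) (δ : Fin L → ℕ)
    (hγ : ∀ k, 0 < γ k) (hδ : ∀ l, 0 < δ l)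
    (hbal : ∑ k, (1 : ℚ) / (γ k : ℚ) = ∑ l, (1 : ℚ) / (δ l : ℚ))
    (hint : ∀ n : ℕ, 0 < n → (∏ l, Nat.factorial (n / δ l)) ∣ ∏ k, Nat.factorial (n / γ k)) :
    ∀ x : ℝ, 0 < x → 0 ≤ floorSumDiff γ δ x ∧ floorSumDiff γ δ x ≤ (L : ℤ) - (K : ℤ) := by
  -- The value of floorSumDiff at a nonnegative real only depends on ⌊x⌋₊.
  have hfsd : ∀ x : ℝ, 0 ≤ x →
      floorSumDiff γ δ x = (∑ k, ((⌊x⌋₊ / γ k : ℕ) : ℤ)) - ∑ l, ((⌊x⌋₊ / δ l : ℕ) : ℤ) := by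
    intro x hx
    unfold floorSumDiff
    rw [Finset.sum_congr rfl fun k _ => aux_floor x hx (γ k),
      Finset.sum_congr rfl fun l _ => aux_floor x hx (δ l)]
  have hnonneg : ∀ x : ℝ, 0 ≤ x → 0 ≤ floorSumDiff γ δ x := by
    intro x hx
    rw [hfsd x hx, sub_nonneg]
    have := aux_nonneg γ δ hγ hδ hint ⌊x⌋₊
    exact_mod_cast this
  intro x hx
  refine ⟨hnonneg x hx.le, ?_⟩
  -- Upper bound
  set m : ℕ := ⌊x⌋₊ with hm
  set M : ℕ := (∏ k, γ k) * (∏ l, δ l) with hM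
  have hMpos : 0 < M := Nat.mul_pos
    (Finset.prod_pos fun k _ => hγ k) (Finset.prod_pos fun l _ => hδ l)
  set N : ℕ := (m + 1) * M with hN
  have hNpos : 0 < N := Nat.mul_pos (Nat.succ_pos m) hMpos
  have hγdvd : ∀ k, γ k ∣ N := fun k =>
    Dvd.dvd.mul_left (Dvd.dvd.mul_right (Finset.dvd_prod_of_mem γ (Finset.mem_univ k)) _) _
  have hδdvd : ∀ l, δ l ∣ N := fun l =>
    Dvd.dvd.mul_left (Dvd.dvd.mul_left (Finset.dvd_prod_of_mem δ (Finset.mem_univ l)) _) _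
  set t : ℝ := (m : ℝ) + 1/2 with ht
  have ht0 : 0 ≤ t := by positivity
  have hft : ⌊t⌋₊ = m := by
    rw [ht, Nat.floor_eq_iff (by positivity)]
    refine ⟨by linarith, by push_cast; linarith⟩
  -- floorSumDiff x = floorSumDiff t
  have hxt : floorSumDiff γ δ x = floorSumDiff γ δ t := by
    rw [hfsd x hx.le, hfsd t ht0, hft]
  set z : ℝ := (N : ℝ) - t with hz
  have hN1 : (m + 1 : ℝ) ≤ N := by
    have : m + 1 ≤ N := Nat.le_mul_of_pos_right _ hMpos
    exact_mod_cast this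
  have hz0 : 0 < z := by rw [hz, ht]; linarith
  -- t/d is never an integer
  have hti : ∀ d : ℕ, 0 < d → ∀ c : ℤ, t / (d : ℝ) ≠ (c : ℝ) := by
    intro d hd c hc
    have hdR : (0 : ℝ) < d := by exact_mod_cast hd
    rw [div_eq_iff (ne_of_gt hdR), ht] at hc
    have h2 : ((2 * (m : ℤ) + 1 : ℤ) : ℝ) = ((2 * c * (d : ℤ) : ℤ) : ℝ) := by
      push_cast
      linear_combination 2 * hc
    have h3 : (2 * (m : ℤ) + 1) = 2 * c * (d : ℤ) := by exact_mod_cast h2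
    have h4 : (2 : ℤ) ∣ 2 * (m : ℤ) + 1 := ⟨c * (d : ℤ), by linear_combination h3⟩
    omega
  -- For each positive divisor d of N, compute ⌊z/d⌋
  have hkey : ∀ d : ℕ, 0 < d → d ∣ N →
      ⌊z / (d : ℝ)⌋ = ((N / d : ℕ) : ℤ) - ⌊t / (d : ℝ)⌋ - 1 := by
    intro d hd hdvd
    have hdR : (0 : ℝ) < d := by exact_mod_cast hd
    have hNd : ((N / d : ℕ) : ℝ) = (N : ℝ) / d := by
      rw [Nat.cast_div hdvd (by exact_mod_cast hd.ne')]
    have hzd : z / (d : ℝ) = -(t / d) + (((N / d : ℕ) : ℤ) : ℝ) := by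
      rw [hz, Int.cast_natCast, hNd, sub_div]; ring
    rw [hzd, Int.floor_add_intCast]
    have h1 : (⌊t / (d : ℝ)⌋ : ℝ) < t / d :=
      lt_of_le_of_ne (Int.floor_le _) fun h => hti d hd ⌊t / (d : ℝ)⌋ h.symm
    have h2 : t / (d : ℝ) < ⌊t / (d : ℝ)⌋ + 1 := Int.lt_floor_add_one _
    have h3 : ⌊-(t / (d : ℝ))⌋ = -⌊t / (d : ℝ)⌋ - 1 := by
      rw [Int.floor_eq_iff]
      constructor <;> push_cast <;> linarith
    rw [h3]; ring
  -- Balance at N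
  have hNbal : (∑ k, ((N / γ k : ℕ) : ℤ)) = ∑ l, ((N / δ l : ℕ) : ℤ) := by
    have hq : (∑ k, ((N / γ k : ℕ) : ℚ)) = ∑ l, ((N / δ l : ℕ) : ℚ) := by
      have e1 : ∀ k, ((N / γ k : ℕ) : ℚ) = (N : ℚ) * (1 / (γ k : ℚ)) := by
        intro k
        rw [Nat.cast_div (hγdvd k) (by exact_mod_cast (hγ k).ne')]; ring
      have e2 : ∀ l, ((N / δ l : ℕ) : ℚ) = (N : ℚ) * (1 / (δ l : ℚ)) := by
        intro l
        rw [Nat.cast_div (hδdvd l) (by exact_mod_cast (hδ l).ne')]; ring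
      calc (∑ k, ((N / γ k : ℕ) : ℚ)) = ∑ k, (N : ℚ) * (1 / (γ k : ℚ)) :=
            Finset.sum_congr rfl fun k _ => e1 k
        _ = (N : ℚ) * ∑ k, (1 : ℚ) / (γ k : ℚ) := by rw [Finset.mul_sum]
        _ = (N : ℚ) * ∑ l, (1 : ℚ) / (δ l : ℚ) := by rw [hbal]
        _ = ∑ l, (N : ℚ) * (1 / (δ l : ℚ)) := by rw [Finset.mul_sum]
        _ = ∑ l, ((N / δ l : ℕ) : ℚ) := Finset.sum_congr rfl fun l _ => (e2 l).symm
    exact_mod_cast hq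
  -- floorSumDiff z = (L - K) - floorSumDiff t
  have hzval : floorSumDiff γ δ z = ((L : ℤ) - K) - floorSumDiff γ δ t := by
    unfold floorSumDiff
    rw [Finset.sum_congr rfl fun k _ => hkey (γ k) (hγ k) (hγdvd k),
      Finset.sum_congr rfl fun l _ => hkey (δ l) (hδ l) (hδdvd l)]
    simp only [Finset.sum_sub_distrib, Finset.sum_const, Finset.card_univ,
      Fintype.card_fin, nsmul_eq_mul, mul_one]
    rw [hNbal]; ring
  have := hnonneg z hz0.le
  rw [hzval] at this
  rw [hxt]
  linarith
end

section
/- For every positive integer n, the ratio ⌊n/30⌋! · n! / (⌊n/2⌋! · ⌊n/3⌋! · ⌊n/5⌋!) is an integer. -/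
open Nat Finset

theorem stmt_16 (n : ℕ) (hn : 0 < n) :
    Nat.factorial (n / 2) * Nat.factorial (n / 3) * Nat.factorial (n / 5) ∣
      Nat.factorial (n / 30) * Nat.factorial n := by
  have key : ∀ m : ℕ, m / 2 + m / 3 + m / 5 ≤ m / 30 + m := by intro m; omega
  have h2 : (n / 2).factorial ≠ 0 := Nat.factorial_ne_zero _
  have h3 : (n / 3).factorial ≠ 0 := Nat.factorial_ne_zero _
  have h5 : (n / 5).factorial ≠ 0 := Nat.factorial_ne_zero _
  have h30 : (n / 30).factorial ≠ 0 := Nat.factorial_ne_zero _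
  have hn' : n.factorial ≠ 0 := Nat.factorial_ne_zero _
  rw [← Nat.factorization_le_iff_dvd (by positivity) (by positivity)]
  intro p
  by_cases hp : p.Prime
  · haveI : Fact p.Prime := ⟨hp⟩
    rw [Nat.factorization_mul (mul_ne_zero h2 h3) h5, Nat.factorization_mul h2 h3,
        Nat.factorization_mul h30 hn']
    simp only [Finsupp.coe_add, Pi.add_apply]
    have hfac : ∀ m : ℕ, (m.factorial.factorization) p = padicValNat p m.factorial := by
      intro m
      rw [Nat.factorization_def _ hp]
    have hlog : ∀ m : ℕ, m ≤ n → Nat.log p m < n + 1 :=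
      fun m hm => lt_of_le_of_lt (le_trans (Nat.log_mono_right hm) (Nat.log_le_self p n))
        (Nat.lt_succ_self n)
    rw [hfac, hfac, hfac, hfac, hfac,
        padicValNat_factorial (hlog _ (Nat.div_le_self n 2)),
        padicValNat_factorial (hlog _ (Nat.div_le_self n 3)),
        padicValNat_factorial (hlog _ (Nat.div_le_self n 5)),
        padicValNat_factorial (hlog _ (Nat.div_le_self n 30)),
        padicValNat_factorial (hlog _ le_rfl)]
    rw [← Finset.sum_add_distrib, ← Finset.sum_add_distrib, ← Finset.sum_add_distrib]
    apply Finset.sum_le_sum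
    intro i _
    have hdiv : ∀ k : ℕ, n / k / p ^ i = n / p ^ i / k := by
      intro k
      rw [Nat.div_div_eq_div_mul, Nat.div_div_eq_div_mul, mul_comm]
    rw [hdiv 2, hdiv 3, hdiv 5, hdiv 30]
    exact key (n / p ^ i)
  · simp [Nat.factorization_eq_zero_of_not_prime _ hp]
end
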